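/- arXiv:1709.09223 — 3 statements merged into one kernel-verified Lean document; each statement's English description precedes it below -/
import Mathlib

section
/- For every integer n ≥ 0, the number of n-step half-space walks on the lattice strip ℤ × {−1,0,1} satisfies h_{[−1,1],n} ≤ (1 + n + n²) · b_{[−1,1],n}, where b_{[−1,1],n} is the number of n-step bridges on ℤ × {−1,0,1} (with h_{[−1,1],0} = b_{[−1,1],0} = 1 by convention). -/
open Filter Finset

/-- An `n`-step self-avoiding walk on the lattice strip `ℤ × {a,…,b}`:
a sequence of pairwise distinct points starting at the origin, with second
coordinates in `[a,b]`, each consecutive pair at `ℓ¹`-distance `1`. -/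
def IsSAW (a b : ℤ) (n : ℕ) (w : Fin (n + 1) → ℤ × ℤ) : Prop :=
  w 0 = (0, 0) ∧ Function.Injective w ∧
  (∀ i, a ≤ (w i).2 ∧ (w i).2 ≤ b) ∧
  ∀ i : Fin n, |(w i.succ).1 - (w i.castSucc).1| + |(w i.succ).2 - (w i.castSucc).2| = 1

/-- The number `c_{[a,b],n}` of `n`-step SAWs on the strip `ℤ × {a,…,b}`. -/
noncomputable def numSAW (a b : ℤ) (n : ℕ) : ℕ :=
  Nat.card {w : Fin (n + 1) → ℤ × ℤ // IsSAW a b n w}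

/-- An `n`-step bridge: a SAW with `x₀ < x_j ≤ x_n` for all `j ≠ 0`. -/
def IsBridge (a b : ℤ) (n : ℕ) (w : Fin (n + 1) → ℤ × ℤ) : Prop :=
  IsSAW a b n w ∧
  ∀ j : Fin (n + 1), j ≠ 0 → (w 0).1 < (w j).1 ∧ (w j).1 ≤ (w (Fin.last n)).1

/-- The number `b_{[a,b],n}` of `n`-step bridges on the strip `ℤ × {a,…,b}`. -/
noncomputable def numBridge (a b : ℤ) (n : ℕ) : ℕ :=
  Nat.card {w : Fin (n + 1) → ℤ × ℤ // IsBridge a b n w}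

/-- An `n`-step half-space walk: a SAW with `x₀ < x_j` for all `j ≠ 0`. -/
def IsHalfSpace (a b : ℤ) (n : ℕ) (w : Fin (n + 1) → ℤ × ℤ) : Prop :=
  IsSAW a b n w ∧ ∀ j : Fin (n + 1), j ≠ 0 → (w 0).1 < (w j).1

/-- The number `h_{[a,b],n}` of `n`-step half-space walks on `ℤ × {a,…,b}`. -/
noncomputable def numHalfSpace (a b : ℤ) (n : ℕ) : ℕ :=
  Nat.card {w : Fin (n + 1) → ℤ × ℤ // IsHalfSpace a b n w}

/-- The connective constant `μ_{[a,b]} = lim_{n→∞} (c_{[a,b],n})^(1/n)`. -/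
noncomputable def connConst (a b : ℤ) : ℝ :=
  limUnder atTop (fun n : ℕ => (numSAW a b n : ℝ) ^ ((n : ℝ)⁻¹))

/-! A half-space walk that is not a bridge becomes one after reflecting, about the column of its
maximal `x`-coordinate, the part of the walk after the last visit to that column; the reflected
walk is again a half-space walk, and the reflection is undone by repeating it. In a strip of
height three at most two reflections are needed: if the twice reflected walk were not a bridge,
the original walk would cross the column of its endpoint upwards, downwards and upwards again
before ending there, so it would visit that column four times, while the column has three sites.
Recording the at most two reflection times, each in `{0, …, n-1}`, injects the half-space walks
into `1 + n + n²` copies of the bridges. -/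

lemma exists_last_argmax {ι α : Type*} [Fintype ι] [LinearOrder ι] [Nonempty ι] [LinearOrder α]
    (f : ι → α) : ∃ j, (∀ k, f k ≤ f j) ∧ ∀ k, j < k → f k < f j := by
  obtain ⟨i, -, hi⟩ := Finset.exists_max_image univ f univ_nonempty
  obtain ⟨j, hj, hjmax⟩ := Finset.exists_max_image {k | f k = f i} id ⟨i, by simp⟩
  rw [mem_filter] at hj
  refine ⟨j, fun k => hj.2 ▸ hi k (mem_univ k), fun k hjk => ?_⟩
  refine lt_of_le_of_ne (hj.2 ▸ hi k (mem_univ k)) fun hk => ?_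
  exact (hjmax k (by simp [hk, hj.2])).not_gt hjk

lemma Fin.exists_eq_of_succ_le_add_one {n : ℕ} {X : Fin (n + 1) → ℤ}
    (hX : ∀ i : Fin n, X i.succ ≤ X i.castSucc + 1) {c : ℤ} {i : Fin (n + 1)} (hi : X i ≤ c) :
    ∀ j, i ≤ j → c ≤ X j → ∃ k, i ≤ k ∧ k ≤ j ∧ X k = c := by
  intro j
  induction j using Fin.induction with
  | zero =>
    intro hij hj
    obtain rfl := Fin.le_zero_iff.mp hij
    exact ⟨0, le_rfl, le_rfl, le_antisymm hi hj⟩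
  | succ j ih =>
    intro hij hj
    rcases hij.eq_or_lt with rfl | hij
    · exact ⟨_, le_rfl, le_rfl, le_antisymm hi hj⟩
    by_cases hc : c ≤ X j.castSucc
    · obtain ⟨k, hik, hkj, hk⟩ := ih (Fin.le_castSucc_iff.mpr hij) hc
      exact ⟨k, hik, hkj.trans (Fin.castSucc_le_succ j), hk⟩
    · exact ⟨j.succ, hij.le, le_rfl, by linarith [hX j]⟩

section Strip

variable {a b : ℤ} {n : ℕ} {w : Fin (n + 1) → ℤ × ℤ}

lemma IsSAW.abs_fst_sub_le_one (hw : IsSAW a b n w) (i : Fin n) :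
    |(w i.succ).1 - (w i.castSucc).1| ≤ 1 := by
  linarith [hw.2.2.2 i, abs_nonneg ((w i.succ).2 - (w i.castSucc).2)]

lemma IsSAW.abs_fst_le (hw : IsSAW a b n w) (i : Fin (n + 1)) : |(w i).1| ≤ i := by
  induction i using Fin.induction with
  | zero => simp [hw.1]
  | succ i ih =>
    have := abs_sub_abs_le_abs_sub (w i.succ).1 (w i.castSucc).1
    push_cast [Fin.val_succ, Fin.val_castSucc] at ih ⊢
    linarith [hw.abs_fst_sub_le_one i]

lemma finite_setOf_isSAW : {w | IsSAW a b n w}.Finite := by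
  refine (Set.Finite.pi fun _ => (Set.finite_Icc (-(n : ℤ)) n).prod (Set.finite_Icc a b)).subset
    fun w hw i _ => ⟨abs_le.mp ((hw.abs_fst_le i).trans ?_), hw.2.2.1 i⟩
  exact_mod_cast i.is_le

lemma IsSAW.exists_fst_eq_of_le_of_le (hw : IsSAW a b n w) {i j : Fin (n + 1)} (hij : i ≤ j)
    {c : ℤ} (hi : (w i).1 ≤ c) (hj : c ≤ (w j).1) : ∃ k, i ≤ k ∧ k ≤ j ∧ (w k).1 = c :=
  Fin.exists_eq_of_succ_le_add_one (fun i => by linarith [abs_le.mp (hw.abs_fst_sub_le_one i)])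
    hi j hij hj

lemma IsSAW.exists_fst_eq_of_ge_of_ge (hw : IsSAW a b n w) {i j : Fin (n + 1)} (hij : i ≤ j)
    {c : ℤ} (hi : c ≤ (w i).1) (hj : (w j).1 ≤ c) : ∃ k, i ≤ k ∧ k ≤ j ∧ (w k).1 = c := by
  obtain ⟨k, hik, hkj, hk⟩ := Fin.exists_eq_of_succ_le_add_one (X := fun k => -(w k).1)
    (fun i => by linarith [abs_le.mp (hw.abs_fst_sub_le_one i)]) (neg_le_neg hi) j hij
    (neg_le_neg hj)
  exact ⟨k, hik, hkj, neg_inj.mp hk⟩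

lemma IsSAW.card_column_le (hw : IsSAW a b n w) (c : ℤ) :
    #{k | (w k).1 = c} ≤ (b + 1 - a).toNat := by
  rw [← Int.card_Icc]
  refine card_le_card_of_injOn (fun k => (w k).2) (fun k _ => mem_Icc.mpr (hw.2.2.1 k)) ?_
  intro k hk l hl hkl
  simp only [coe_filter, mem_univ, true_and] at hk hl
  exact hw.2.1 (Prod.ext (hk.trans hl.symm) hkl)

lemma IsSAW.not_four_in_column (hw : IsSAW (-1) 1 n w) {c : ℤ} {k₁ k₂ k₃ k₄ : Fin (n + 1)}
    (h₁₂ : k₁ < k₂) (h₂₃ : k₂ < k₃) (h₃₄ : k₃ < k₄) :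
    ¬((w k₁).1 = c ∧ (w k₂).1 = c ∧ (w k₃).1 = c ∧ (w k₄).1 = c) := by
  rintro ⟨h₁, h₂, h₃, h₄⟩
  have hsub : {k₁, k₂, k₃, k₄} ⊆ ({k | (w k).1 = c} : Finset _) := by
    intro k hk
    simp only [mem_insert, mem_singleton] at hk
    rcases hk with rfl | rfl | rfl | rfl <;> simpa
  have hcard : #({k₁, k₂, k₃, k₄} : Finset _) = 4 := by
    have := h₁₂.trans h₂₃
    have := h₂₃.trans h₃₄
    have := h₁₂.trans (h₂₃.trans h₃₄)
    rw [card_insert_of_notMem, card_insert_of_notMem, card_pair h₃₄.ne] <;> simp [*, ne_of_lt]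
  have := (card_le_card hsub).trans (hw.card_column_le c)
  simp [hcard] at this

lemma IsSAW.fst_last_ne_of_zigzag (hw : IsSAW (-1) 1 n w) {c : ℤ} {i₁ i₂ i₃ i₄ : Fin (n + 1)}
    (h₁₂ : i₁ ≤ i₂) (h₂₃ : i₂ ≤ i₃) (h₃₄ : i₃ ≤ i₄) (h₁ : (w i₁).1 ≤ c) (h₂ : c < (w i₂).1)
    (h₃ : (w i₃).1 < c) (h₄ : c < (w i₄).1) : (w (Fin.last n)).1 ≠ c := by
  intro hlast
  obtain ⟨k₁, -, hk₁, e₁⟩ := hw.exists_fst_eq_of_le_of_le h₁₂ h₁ h₂.le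
  obtain ⟨k₂, hk₂, hk₂', e₂⟩ := hw.exists_fst_eq_of_ge_of_ge h₂₃ h₂.le h₃.le
  obtain ⟨k₃, hk₃, hk₃', e₃⟩ := hw.exists_fst_eq_of_le_of_le h₃₄ h₃.le h₄.le
  have ne {i k : Fin (n + 1)} (hi : (w i).1 ≠ c) (hk : (w k).1 = c) : k ≠ i := by
    rintro rfl; exact hi hk
  exact hw.not_four_in_column
    ((hk₁.lt_of_ne (ne h₂.ne' e₁)).trans_le hk₂)
    ((hk₂'.lt_of_ne (ne h₃.ne e₂)).trans_le hk₃)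
    ((hk₃'.lt_of_ne (ne h₄.ne' e₃)).trans_le (Fin.le_last i₄)) ⟨e₁, e₂, e₃, hlast⟩

def reflectAfter (j : Fin (n + 1)) (w : Fin (n + 1) → ℤ × ℤ) : Fin (n + 1) → ℤ × ℤ :=
  fun k => if k ≤ j then w k else (2 * (w j).1 - (w k).1, (w k).2)

section Reflection

variable {j k : Fin (n + 1)}

lemma reflectAfter_of_le (h : k ≤ j) : reflectAfter j w k = w k := if_pos h

lemma reflectAfter_of_lt (h : j < k) :
    reflectAfter j w k = (2 * (w j).1 - (w k).1, (w k).2) := if_neg h.not_ge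

lemma reflectAfter_reflectAfter : reflectAfter j (reflectAfter j w) = w := by
  funext k
  rcases le_or_gt k j with h | h
  · simp only [reflectAfter_of_le h]
  · simp [reflectAfter_of_lt h, reflectAfter_of_le le_rfl]

lemma snd_reflectAfter : (reflectAfter j w k).2 = (w k).2 := by
  unfold reflectAfter
  split_ifs <;> rfl

lemma abs_fst_reflectAfter_sub (i : Fin n) :
    |(reflectAfter j w i.succ).1 - (reflectAfter j w i.castSucc).1| =
      |(w i.succ).1 - (w i.castSucc).1| := by
  rcases le_or_gt i.succ j with h | h
  · rw [reflectAfter_of_le h, reflectAfter_of_le ((Fin.castSucc_le_succ i).trans h)]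
  rw [reflectAfter_of_lt h, abs_sub_comm]
  rcases (Fin.le_castSucc_iff.mpr h).eq_or_lt with rfl | h'
  · rw [reflectAfter_of_le le_rfl]
    congr 1
    ring
  · rw [reflectAfter_of_lt h']
    congr 1
    ring

variable (hmax : ∀ k, (w k).1 ≤ (w j).1) (hlt : ∀ k, j < k → (w k).1 < (w j).1)
include hmax hlt

lemma le_iff_fst_reflectAfter_le : k ≤ j ↔ (reflectAfter j w k).1 ≤ (w j).1 := by
  rcases le_or_gt k j with h | h
  · simp [reflectAfter_of_le h, h, hmax k]
  · simp only [reflectAfter_of_lt h, h.not_ge, false_iff, not_le]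
    linarith [hlt k h]

lemma IsSAW.reflectAfter (hw : IsSAW a b n w) : IsSAW a b n (reflectAfter j w) := by
  refine ⟨(reflectAfter_of_le (Fin.zero_le j)).trans hw.1, fun k l hkl => ?_, fun k => ?_,
    fun i => ?_⟩
  · have hside : k ≤ j ↔ l ≤ j := by
      rw [le_iff_fst_reflectAfter_le hmax hlt, hkl, ← le_iff_fst_reflectAfter_le hmax hlt]
    rcases le_or_gt k j with hk | hk
    · rw [reflectAfter_of_le hk, reflectAfter_of_le (hside.mp hk)] at hkl
      exact hw.2.1 hkl
    · have hl : j < l := by rw [← not_le, ← hside, not_le]; exact hk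
      rw [reflectAfter_of_lt hk, reflectAfter_of_lt hl, Prod.mk.injEq, sub_right_inj] at hkl
      exact hw.2.1 (Prod.ext hkl.1 hkl.2)
  · rw [snd_reflectAfter]
    exact hw.2.2.1 k
  · rw [abs_fst_reflectAfter_sub, snd_reflectAfter, snd_reflectAfter]
    exact hw.2.2.2 i

lemma IsHalfSpace.reflectAfter (hw : IsHalfSpace a b n w) :
    IsHalfSpace a b n (reflectAfter j w) := by
  refine ⟨hw.1.reflectAfter hmax hlt, fun k hk => ?_⟩
  rw [reflectAfter_of_le (Fin.zero_le j)]
  rcases le_or_gt k j with h | h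
  · rw [reflectAfter_of_le h]
    exact hw.2 k hk
  · rw [reflectAfter_of_lt h]
    linarith [hlt k h, hmax 0]

omit hlt in
lemma fst_reflectAfter_le_last (hj : j < Fin.last n)
    (hlow : ∀ k, j < k → (w (Fin.last n)).1 ≤ (w k).1) :
    (reflectAfter j w k).1 ≤ (reflectAfter j w (Fin.last n)).1 := by
  rw [reflectAfter_of_lt hj]
  rcases le_or_gt k j with h | h
  · rw [reflectAfter_of_le h]
    linarith [hmax k, hmax (Fin.last n)]
  · rw [reflectAfter_of_lt h]
    linarith [hlow k h]

end Reflection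

lemma IsHalfSpace.isBridge_of_fst_le_last (hw : IsHalfSpace a b n w)
    (h : ∀ k, (w k).1 ≤ (w (Fin.last n)).1) : IsBridge a b n w :=
  ⟨hw.1, fun j hj => ⟨hw.2 j hj, h j⟩⟩

lemma fst_reflectAfter_last_le (hw : IsHalfSpace (-1) 1 n w) {j₁ j₂ : Fin (n + 1)}
    (hmax₁ : ∀ k, (w k).1 ≤ (w j₁).1) (hj₁ : j₁ < Fin.last n)
    (hlast : (w (Fin.last n)).1 < (w j₁).1)
    (h₂ : (reflectAfter j₁ w (Fin.last n)).1 < (reflectAfter j₁ w j₂).1) {k : Fin (n + 1)}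
    (hk : j₂ < k) : (reflectAfter j₁ w (Fin.last n)).1 ≤ (reflectAfter j₁ w k).1 := by
  have hj₁₂ : j₁ < j₂ := by
    by_contra! h
    rw [reflectAfter_of_le h, reflectAfter_of_lt hj₁] at h₂
    linarith [hmax₁ j₂]
  rw [reflectAfter_of_lt hj₁₂, reflectAfter_of_lt hj₁] at h₂
  rw [reflectAfter_of_lt hj₁, reflectAfter_of_lt (hj₁₂.trans hk)]
  dsimp only at h₂ ⊢
  by_contra! hc
  have hpos : (w 0).1 < (w (Fin.last n)).1 := hw.2 _ ((Fin.zero_le j₁).trans_lt hj₁).ne'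
  exact hw.1.fst_last_ne_of_zigzag (Fin.zero_le j₁) hj₁₂.le hk.le hpos.le hlast
    (by linarith) (by linarith) rfl

-- A reflection time is never the last vertex, so it is stored in `Fin n`.
abbrev ReflectionCode (n : ℕ) := Unit ⊕ Fin n ⊕ Fin n × Fin n

def ReflectionCode.decode : ReflectionCode n → (Fin (n + 1) → ℤ × ℤ) → Fin (n + 1) → ℤ × ℤ
  | .inl _, v => v
  | .inr (.inl j), v => reflectAfter j.castSucc v
  | .inr (.inr (j₁, j₂)), v => reflectAfter j₁.castSucc (reflectAfter j₂.castSucc v)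

lemma exists_isBridge_eq_decode_of_isHalfSpace (hw : IsHalfSpace (-1) 1 n w) :
    ∃ (t : ReflectionCode n) (v : Fin (n + 1) → ℤ × ℤ), IsBridge (-1) 1 n v ∧ w = t.decode v := by
  by_cases hb : ∀ k, (w k).1 ≤ (w (Fin.last n)).1
  · exact ⟨.inl (), w, hw.isBridge_of_fst_le_last hb, rfl⟩
  obtain ⟨j₁, hmax₁, hlt₁⟩ := exists_last_argmax fun k => (w k).1
  have hj₁ : j₁ < Fin.last n := (Fin.le_last j₁).lt_of_ne fun h => hb (h ▸ hmax₁)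
  set w₁ := reflectAfter j₁ w
  have hw₁ : IsHalfSpace (-1) 1 n w₁ := hw.reflectAfter hmax₁ hlt₁
  by_cases hb₁ : ∀ k, (w₁ k).1 ≤ (w₁ (Fin.last n)).1
  · refine ⟨.inr (.inl (j₁.castPred hj₁.ne)), w₁, hw₁.isBridge_of_fst_le_last hb₁, ?_⟩
    simp [ReflectionCode.decode, w₁, reflectAfter_reflectAfter]
  obtain ⟨j₂, hmax₂, hlt₂⟩ := exists_last_argmax fun k => (w₁ k).1
  have hj₂ : j₂ < Fin.last n := (Fin.le_last j₂).lt_of_ne fun h => hb₁ (h ▸ hmax₂)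
  refine ⟨.inr (.inr (j₁.castPred hj₁.ne, j₂.castPred hj₂.ne)), reflectAfter j₂ w₁,
    (hw₁.reflectAfter hmax₂ hlt₂).isBridge_of_fst_le_last fun k =>
      fst_reflectAfter_le_last hmax₂ hj₂ fun k hk =>
        fst_reflectAfter_last_le hw hmax₁ hj₁ (hlt₁ _ hj₁) (hlt₂ _ hj₂) hk, ?_⟩
  simp [ReflectionCode.decode, w₁, reflectAfter_reflectAfter]

end Strip

/-- For all `n ≥ 0`, `h_{[−1,1],n} ≤ (1 + n + n²) · b_{[−1,1],n}`. -/
theorem stmt_8 (n : ℕ) :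
    numHalfSpace (-1) 1 n ≤ (1 + n + n ^ 2) * numBridge (-1) 1 n := by
  choose t v hv hw using fun w : {w // IsHalfSpace (-1) 1 n w} =>
    exists_isBridge_eq_decode_of_isHalfSpace w.2
  have : Finite {w // IsBridge (-1) 1 n w} :=
    (finite_setOf_isSAW.subset fun _ hw => hw.1).to_subtype
  have hinj : Function.Injective fun w => (t w, (⟨v w, hv w⟩ : {w // IsBridge (-1) 1 n w})) := by
    intro w w' h
    simp only [Prod.mk.injEq, Subtype.mk.injEq] at h
    exact Subtype.ext (by rw [hw w, hw w', h.1, h.2])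
  calc numHalfSpace (-1) 1 n ≤ Nat.card (ReflectionCode n × {w // IsBridge (-1) 1 n w}) :=
        Nat.card_le_card_of_injective _ hinj
    _ = (1 + n + n ^ 2) * numBridge (-1) 1 n := by
        rw [Nat.card_prod, numBridge]
        simp [sq, add_assoc]
end

section
/- For every integer n ≥ 1, the number of n-step self-avoiding walks on the lattice strip ℤ × {−1,0,1} satisfies c_{[−1,1],n} ≤ b_{[−1,1],n+1} · ((n+1) + 2(n+1)² + 3(n+1)³ + 2(n+1)⁴ + (n+1)⁵), where b_{[−1,1],n+1} is the number of (n+1)-step bridges on ℤ × {−1,0,1}. -/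
open Filter Finset

/-!
Hammersley–Welsh unfolding in the strip `ℤ × {-1, 0, 1}`. A walk in this strip meets every
vertical line in at most three points, so its `x`-coordinate cannot alternate four times around a
level. Reflecting the part of the walk before its first leftmost point (repeatedly) therefore makes
the start a leftmost point after at most three reflections; one extra step to the left makes it
strictly leftmost, and then at most two reflections of the part after the last rightmost point make
the end a rightmost point. The result is an `(n+1)`-step bridge from which the walk is recovered
given the five pivots (a reflection at the first or last index is trivial, so exactly three and two
pivots always suffice), hence `c_n ≤ b_{n+1} (n+1)³ (n+2)²`, which is below the stated polynomial.
-/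

theorem card_le_card_mul_card_of_forall_exists {X β γ : Type*} [Finite β] [Finite γ]
    {P : X → Prop} (g : β → γ → X) (h : ∀ x, P x → ∃ b c, g b c = x) :
    Nat.card {x // P x} ≤ Nat.card β * Nat.card γ := by
  choose b c hbc using fun x : {x // P x} => h x x.2
  rw [← Nat.card_prod]
  refine Nat.card_le_card_of_injective (fun x => (b x, c x)) fun x y hxy => Subtype.ext ?_
  simp only [Prod.mk.injEq] at hxy
  rw [← hbc x, ← hbc y, hxy.1, hxy.2]

structure IsStripWalk (a b : ℤ) (n : ℕ) (w : Fin (n + 1) → ℤ × ℤ) : Prop where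
  injective : Function.Injective w
  mem_strip : ∀ i, a ≤ (w i).2 ∧ (w i).2 ≤ b
  step : ∀ i : Fin n, |(w i.succ).1 - (w i.castSucc).1| + |(w i.succ).2 - (w i.castSucc).2| = 1

theorem isSAW_iff {a b : ℤ} {n : ℕ} {w : Fin (n + 1) → ℤ × ℤ} :
    IsSAW a b n w ↔ w 0 = (0, 0) ∧ IsStripWalk a b n w :=
  ⟨fun ⟨h₀, h₁, h₂, h₃⟩ => ⟨h₀, h₁, h₂, h₃⟩, fun ⟨h₀, h₁, h₂, h₃⟩ => ⟨h₀, h₁, h₂, h₃⟩⟩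

theorem intermediate_value_of_step_le_one {n : ℕ} {f : Fin (n + 1) → ℤ}
    (hf : ∀ i : Fin n, f i.succ ≤ f i.castSucc + 1) {i j : Fin (n + 1)} (hij : i ≤ j) {c : ℤ}
    (hi : f i ≤ c) (hj : c ≤ f j) : ∃ k ∈ Set.Icc i j, f k = c := by
  induction j using Fin.induction with
  | zero =>
    obtain rfl := Fin.le_zero_iff.mp hij
    exact ⟨0, ⟨le_rfl, le_rfl⟩, le_antisymm hi hj⟩
  | succ j ih =>
    by_cases hij' : i ≤ j.castSucc
    · by_cases hcj : c ≤ f j.castSucc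
      · obtain ⟨k, ⟨hik, hkj⟩, hk⟩ := ih hij' hcj
        exact ⟨k, ⟨hik, hkj.trans Fin.castSucc_lt_succ.le⟩, hk⟩
      · exact ⟨j.succ, ⟨hij, le_rfl⟩, le_antisymm (by linarith [hf j]) hj⟩
    · obtain rfl : i = j.succ := le_antisymm hij (not_lt.mp (Fin.le_castSucc_iff.not.mp hij'))
      exact ⟨j.succ, ⟨le_rfl, le_rfl⟩, le_antisymm hi hj⟩

namespace IsStripWalk

variable {a b : ℤ} {n : ℕ} {w : Fin (n + 1) → ℤ × ℤ}

theorem abs_fst_step_le (hw : IsStripWalk a b n w) (i : Fin n) :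
    |(w i.succ).1 - (w i.castSucc).1| ≤ 1 := by
  linarith [hw.step i, abs_nonneg ((w i.succ).2 - (w i.castSucc).2)]

theorem sub_const (hw : IsStripWalk a b n w) (t : ℤ × ℤ) :
    IsStripWalk (a - t.2) (b - t.2) n (fun j => w j - t) where
  injective _ _ h := hw.injective (sub_left_injective h)
  mem_strip i := by
    simp only [Prod.snd_sub]
    exact ⟨by linarith [(hw.mem_strip i).1], by linarith [(hw.mem_strip i).2]⟩
  step i := by simpa only [Prod.fst_sub, Prod.snd_sub, sub_sub_sub_cancel_right] using hw.step i

theorem exists_fst_eq_of_le_of_le (hw : IsStripWalk a b n w) {i j : Fin (n + 1)} (hij : i ≤ j)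
    {c : ℤ} (hi : (w i).1 ≤ c) (hj : c ≤ (w j).1) : ∃ k ∈ Set.Icc i j, (w k).1 = c :=
  intermediate_value_of_step_le_one (fun k => by linarith [(abs_le.mp (hw.abs_fst_step_le k)).2])
    hij hi hj

theorem exists_fst_eq_of_ge_of_ge (hw : IsStripWalk a b n w) {i j : Fin (n + 1)} (hij : i ≤ j)
    {c : ℤ} (hi : c ≤ (w i).1) (hj : (w j).1 ≤ c) : ∃ k ∈ Set.Icc i j, (w k).1 = c := by
  obtain ⟨k, hk, hkc⟩ := intermediate_value_of_step_le_one (f := fun k => -(w k).1)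
    (fun k => by linarith [(abs_le.mp (hw.abs_fst_step_le k)).1]) hij (neg_le_neg hi)
    (neg_le_neg hj)
  exact ⟨k, hk, neg_inj.mp hkc⟩

theorem card_le_of_fst_eq (hw : IsStripWalk a b n w) {s : Finset (Fin (n + 1))} {c : ℤ}
    (hs : ∀ k ∈ s, (w k).1 = c) : s.card ≤ (b + 1 - a).toNat := by
  rw [← Int.card_Icc]
  refine Finset.card_le_card_of_injOn (fun k => (w k).2)
    (fun k _ => Finset.mem_Icc.mpr (hw.mem_strip k)) fun j hj k hk hjk => ?_
  exact hw.injective (Prod.ext ((hs j hj).trans (hs k hk).symm) hjk)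

theorem not_alternating (hw : IsStripWalk (-1) 1 n w) {i₀ i₁ i₂ i₃ i₄ : Fin (n + 1)}
    (h₀₁ : i₀ ≤ i₁) (h₁₂ : i₁ ≤ i₂) (h₂₃ : i₂ ≤ i₃) (h₃₄ : i₃ ≤ i₄) {c : ℤ}
    (h₀ : (w i₀).1 ≤ c) (h₁ : c < (w i₁).1) (h₂ : (w i₂).1 < c) (h₃ : c < (w i₃).1)
    (h₄ : (w i₄).1 ≤ c) : False := by
  -- four crossings of the line `x = c`, which carries only three points of the strip
  obtain ⟨k₁, ⟨-, hk₁⟩, e₁⟩ := hw.exists_fst_eq_of_le_of_le h₀₁ h₀ h₁.le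
  obtain ⟨k₂, ⟨hk₂, hk₂'⟩, e₂⟩ := hw.exists_fst_eq_of_ge_of_ge h₁₂ h₁.le h₂.le
  obtain ⟨k₃, ⟨hk₃, hk₃'⟩, e₃⟩ := hw.exists_fst_eq_of_le_of_le h₂₃ h₂.le h₃.le
  obtain ⟨k₄, ⟨hk₄, -⟩, e₄⟩ := hw.exists_fst_eq_of_ge_of_ge h₃₄ h₃.le h₄
  have l₁₂ : k₁ < k₂ := (lt_of_le_of_ne hk₁ (by rintro rfl; linarith)).trans_le hk₂
  have l₂₃ : k₂ < k₃ := (lt_of_le_of_ne hk₂' (by rintro rfl; linarith)).trans_le hk₃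
  have l₃₄ : k₃ < k₄ := (lt_of_le_of_ne hk₃' (by rintro rfl; linarith)).trans_le hk₄
  have hcard := hw.card_le_of_fst_eq (s := {k₁, k₂, k₃, k₄}) (c := c) (by simp [e₁, e₂, e₃, e₄])
  rw [Finset.card_insert_of_notMem, Finset.card_insert_of_notMem, Finset.card_pair l₃₄.ne] at hcard
  · norm_num at hcard
  · simp [l₂₃.ne, (l₂₃.trans l₃₄).ne]
  · simp [l₁₂.ne, (l₁₂.trans l₂₃).ne, (l₁₂.trans (l₂₃.trans l₃₄)).ne]

end IsStripWalk

section Extremal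

variable {ι β : Type*} [LinearOrder ι] [LinearOrder β]

def IsFirstArgmin (f : ι → β) (p : ι) : Prop :=
  (∀ j, f p ≤ f j) ∧ ∀ j < p, f p < f j

def IsLastArgmax (f : ι → β) (p : ι) : Prop :=
  (∀ j, f j ≤ f p) ∧ ∀ j, p < j → f j < f p

-- Both are lexicographic extrema of `j ↦ (f j, j)`.
theorem exists_isFirstArgmin [Fintype ι] [Nonempty ι] (f : ι → β) : ∃ p, IsFirstArgmin f p := by
  obtain ⟨p, -, hp⟩ := Finset.univ.exists_min_image (fun j => toLex (f j, j)) Finset.univ_nonempty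
  have hp' : ∀ j, f p < f j ∨ f p = f j ∧ p ≤ j := fun j => Prod.Lex.le_iff.mp (hp j (mem_univ j))
  refine ⟨p, fun j => ?_, fun j hj => ?_⟩ <;> rcases hp' j with h | ⟨h, h'⟩
  exacts [h.le, h.le, h, absurd h' (not_le.mpr hj)]

theorem exists_isLastArgmax [Fintype ι] [Nonempty ι] (f : ι → β) : ∃ p, IsLastArgmax f p := by
  obtain ⟨p, -, hp⟩ := Finset.univ.exists_max_image (fun j => toLex (f j, j)) Finset.univ_nonempty
  have hp' : ∀ j, f j < f p ∨ f j = f p ∧ j ≤ p := fun j => Prod.Lex.le_iff.mp (hp j (mem_univ j))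
  refine ⟨p, fun j => ?_, fun j hj => ?_⟩ <;> rcases hp' j with h | ⟨h, h'⟩
  exacts [h.le, h.le, h, absurd h' (not_le.mpr hj)]

end Extremal

def reflectX (c : ℤ) (z : ℤ × ℤ) : ℤ × ℤ := (2 * c - z.1, z.2)

@[simp] theorem reflectX_fst (c : ℤ) (z : ℤ × ℤ) : (reflectX c z).1 = 2 * c - z.1 := rfl

@[simp] theorem reflectX_snd (c : ℤ) (z : ℤ × ℤ) : (reflectX c z).2 = z.2 := rfl

@[simp] theorem reflectX_reflectX (c : ℤ) (z : ℤ × ℤ) : reflectX c (reflectX c z) = z := by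
  simp [reflectX]

theorem reflectX_sub (c : ℤ) (z t : ℤ × ℤ) : reflectX (c - t.1) (z - t) = reflectX c z - t := by
  ext <;> simp only [reflectX_fst, reflectX_snd, Prod.fst_sub, Prod.snd_sub]; ring

section Reflect

variable {ι : Type*}

def reflectOn (P : ι → Prop) [DecidablePred P] (c : ℤ) (w : ι → ℤ × ℤ) (j : ι) : ℤ × ℤ :=
  if P j then reflectX c (w j) else w j

variable (P : ι → Prop) [DecidablePred P] (c : ℤ) (w : ι → ℤ × ℤ)

theorem reflectOn_of_pos {j : ι} (h : P j) : reflectOn P c w j = reflectX c (w j) := if_pos h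

theorem reflectOn_of_neg {j : ι} (h : ¬P j) : reflectOn P c w j = w j := if_neg h

@[simp] theorem reflectOn_snd (j : ι) : (reflectOn P c w j).2 = (w j).2 := by
  unfold reflectOn; split_ifs <;> rfl

theorem reflectOn_reflectOn : reflectOn P c (reflectOn P c w) = w := by
  funext j; unfold reflectOn; split_ifs <;> simp

theorem reflectOn_sub (t : ℤ × ℤ) :
    reflectOn P (c - t.1) (fun j => w j - t) = fun j => reflectOn P c w j - t := by
  funext j; unfold reflectOn; split_ifs
  exacts [reflectX_sub c (w j) t, rfl]

end Reflect

-- `hcross`: the walk enters and leaves `P` only through the pivot `p`, which lies on the mirror.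
theorem isStripWalk_reflectOn {a b : ℤ} {n : ℕ} {w : Fin (n + 1) → ℤ × ℤ}
    (hw : IsStripWalk a b n w) (P : Fin (n + 1) → Prop) [DecidablePred P] {p : Fin (n + 1)}
    (hp : ¬P p) (hcross : ∀ i : Fin n, (P i.castSucc ↔ P i.succ) ∨ i.castSucc = p ∨ i.succ = p)
    (hsep : ∀ j k, P j → ¬P k → (w j).1 + (w k).1 ≠ 2 * (w p).1) :
    IsStripWalk a b n (reflectOn P (w p).1 w) where
  injective j k h := by
    unfold reflectOn at h
    split_ifs at h with hj hk hk
    · exact hw.injective (by simpa using congrArg (reflectX (w p).1) h)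
    · exact absurd (congrArg Prod.fst h) fun h' => hsep j k hj hk (by simp at h'; omega)
    · exact absurd (congrArg Prod.fst h) fun h' => hsep k j hk hj (by simp at h'; omega)
    · exact hw.injective h
  mem_strip i := by simpa using hw.mem_strip i
  step i := by
    have hx : |(reflectOn P (w p).1 w i.succ).1 -
        (reflectOn P (w p).1 w i.castSucc).1| = |(w i.succ).1 - (w i.castSucc).1| := by
      unfold reflectOn
      split_ifs with h₁ h₂ h₂
      · rw [← abs_neg]; congr 1; simp only [reflectX_fst]; ring
      · obtain rfl : i.castSucc = p := by
          rcases hcross i with h | h | h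
          exacts [absurd (h.mpr h₁) h₂, h, absurd (h ▸ h₁) hp]
        rw [← abs_neg]; congr 1; simp only [reflectX_fst]; ring
      · obtain rfl : i.succ = p := by
          rcases hcross i with h | h | h
          exacts [absurd (h.mp h₂) h₁, absurd (h ▸ h₂) hp, h]
        rw [← abs_neg]; congr 1; simp only [reflectX_fst]; ring
      · rfl
    rw [hx, reflectOn_snd, reflectOn_snd]
    exact hw.step i

section HeadTail

variable {ι : Type*} [LinearOrder ι] (p : ι) (w : ι → ℤ × ℤ)

def reflectHead : ι → ℤ × ℤ := reflectOn (· < p) (w p).1 w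

def reflectTail : ι → ℤ × ℤ := reflectOn (p < ·) (w p).1 w

variable {p} {j : ι}

theorem reflectHead_of_lt (h : j < p) : reflectHead p w j = reflectX (w p).1 (w j) :=
  reflectOn_of_pos _ _ _ h

theorem reflectHead_of_le (h : p ≤ j) : reflectHead p w j = w j :=
  reflectOn_of_neg _ _ _ (not_lt.mpr h)

theorem reflectTail_of_lt (h : p < j) : reflectTail p w j = reflectX (w p).1 (w j) :=
  reflectOn_of_pos _ _ _ h

theorem reflectTail_of_le (h : j ≤ p) : reflectTail p w j = w j :=
  reflectOn_of_neg _ _ _ (not_lt.mpr h)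

@[simp] theorem reflectHead_snd (j : ι) : (reflectHead p w j).2 = (w j).2 := reflectOn_snd _ _ _ _

@[simp] theorem reflectHead_reflectHead : reflectHead p (reflectHead p w) = w := by
  rw [reflectHead, reflectHead_of_le w le_rfl]; exact reflectOn_reflectOn _ _ _

@[simp] theorem reflectTail_reflectTail : reflectTail p (reflectTail p w) = w := by
  rw [reflectTail, reflectTail_of_le w le_rfl]; exact reflectOn_reflectOn _ _ _

theorem reflectHead_sub (t : ℤ × ℤ) :
    reflectHead p (fun j => w j - t) = fun j => reflectHead p w j - t :=
  reflectOn_sub _ _ _ t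

theorem reflectTail_sub (t : ℤ × ℤ) :
    reflectTail p (fun j => w j - t) = fun j => reflectTail p w j - t :=
  reflectOn_sub _ _ _ t

theorem reflectHead_fst_sub_fst {i : ι} (hi : i < p) (hj : j < p) :
    (reflectHead p w j).1 - (reflectHead p w i).1 = (w i).1 - (w j).1 := by
  rw [reflectHead_of_lt w hi, reflectHead_of_lt w hj, reflectX_fst, reflectX_fst]; ring

theorem reflectTail_fst_sub_fst {i : ι} (hi : p < i) (hj : p < j) :
    (reflectTail p w j).1 - (reflectTail p w i).1 = (w i).1 - (w j).1 := by
  rw [reflectTail_of_lt w hi, reflectTail_of_lt w hj, reflectX_fst, reflectX_fst]; ring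

end HeadTail

section StripWalk

variable {a b : ℤ} {n : ℕ} {w : Fin (n + 1) → ℤ × ℤ} {p : Fin (n + 1)}

theorem isStripWalk_reflectHead (hw : IsStripWalk a b n w)
    (hp : IsFirstArgmin (fun j => (w j).1) p) :
    IsStripWalk a b n (reflectHead p w) := by
  refine isStripWalk_reflectOn hw _ (lt_irrefl p) (fun i => ?_) fun j k hj hk => ?_
  · by_cases h : i.succ = p
    · exact .inr (.inr h)
    · exact .inl ⟨fun h' => lt_of_le_of_ne (Fin.castSucc_lt_iff_succ_le.mp h') h,
        Fin.castSucc_lt_succ.trans⟩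
  · have h₁ : (w p).1 < (w j).1 := hp.2 j hj
    have h₂ : (w p).1 ≤ (w k).1 := hp.1 k
    omega

theorem isStripWalk_reflectTail (hw : IsStripWalk a b n w)
    (hp : IsLastArgmax (fun j => (w j).1) p) :
    IsStripWalk a b n (reflectTail p w) := by
  refine isStripWalk_reflectOn hw _ (lt_irrefl p) (fun i => ?_) fun j k hj hk => ?_
  · by_cases h : i.castSucc = p
    · exact .inr (.inl h)
    · exact .inl ⟨fun h' => h'.trans Fin.castSucc_lt_succ,
        fun h' => lt_of_le_of_ne (Fin.le_castSucc_iff.mpr h') (Ne.symm h)⟩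
  · have h₁ : (w j).1 < (w p).1 := hp.2 j hj
    have h₂ : (w k).1 ≤ (w p).1 := hp.1 k
    omega

end StripWalk

section Pivots

variable {n : ℕ} {w : Fin (n + 1) → ℤ × ℤ} {p q : Fin (n + 1)}

theorem IsFirstArgmin.lt_of_reflectHead (hp : IsFirstArgmin (fun j => (w j).1) p)
    (hq : IsFirstArgmin (fun j => (reflectHead p w j).1) q) (hq₀ : 0 < q) : q < p := by
  by_contra! hpq
  have h₁ : (reflectHead p w q).1 < (reflectHead p w 0).1 := hq.2 0 hq₀
  have h₂ : (w p).1 ≤ (w q).1 := hp.1 q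
  rw [reflectHead_of_le w hpq] at h₁
  obtain rfl | hp₀ := (Fin.zero_le p).eq_or_lt
  · rw [reflectHead_of_le w le_rfl] at h₁
    omega
  · have h₃ : (w p).1 < (w 0).1 := hp.2 0 hp₀
    rw [reflectHead_of_lt w hp₀, reflectX_fst] at h₁
    omega

theorem IsLastArgmax.lt_of_reflectTail (hp : IsLastArgmax (fun j => (w j).1) p)
    (hq : IsLastArgmax (fun j => (reflectTail p w j).1) q) (hq₀ : q < Fin.last n) : p < q := by
  by_contra! hqp
  have h₁ : (reflectTail p w (Fin.last n)).1 < (reflectTail p w q).1 := hq.2 _ hq₀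
  have h₂ : (w q).1 ≤ (w p).1 := hp.1 q
  rw [reflectTail_of_le w hqp] at h₁
  obtain rfl | hp₀ := (Fin.le_last p).eq_or_lt
  · rw [reflectTail_of_le w le_rfl] at h₁
    omega
  · have h₃ : (w (Fin.last n)).1 < (w p).1 := hp.2 _ hp₀
    rw [reflectTail_of_lt w hp₀, reflectX_fst] at h₁
    omega

theorem IsLastArgmax.reflectTail_fst_zero_lt (hp : IsLastArgmax (fun j => (w j).1) p)
    (hmin : ∀ j ≠ 0, (w 0).1 < (w j).1) :
    ∀ j ≠ 0, (reflectTail p w 0).1 < (reflectTail p w j).1 := by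
  intro j hj
  rw [reflectTail_of_le w (Fin.zero_le p)]
  rcases le_or_gt j p with h | h
  · rw [reflectTail_of_le w h]
    exact hmin j hj
  · have h₁ : (w j).1 < (w p).1 := hp.2 j h
    have h₂ : (w 0).1 ≤ (w p).1 := hp.1 0
    rw [reflectTail_of_lt w h, reflectX_fst]
    omega

end Pivots

namespace IsStripWalk

variable {n : ℕ} {w : Fin (n + 1) → ℤ × ℤ}

theorem exists_reflectHead_eq (hw : IsStripWalk (-1) 1 n w) :
    ∃ p₁ p₂ p₃ : Fin (n + 1), ∃ u, IsStripWalk (-1) 1 n u ∧ (∀ j, (u 0).1 ≤ (u j).1) ∧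
      (u 0).2 = (w 0).2 ∧ reflectHead p₁ (reflectHead p₂ (reflectHead p₃ u)) = w := by
  obtain ⟨p₁, h₁⟩ := exists_isFirstArgmin fun j => (w j).1
  set u₁ := reflectHead p₁ w
  obtain ⟨p₂, h₂⟩ := exists_isFirstArgmin fun j => (u₁ j).1
  set u₂ := reflectHead p₂ u₁
  obtain ⟨p₃, h₃⟩ := exists_isFirstArgmin fun j => (u₂ j).1
  set u₃ := reflectHead p₃ u₂
  obtain ⟨p₄, h₄⟩ := exists_isFirstArgmin fun j => (u₃ j).1
  have hu₃ : IsStripWalk (-1) 1 n u₃ :=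
    isStripWalk_reflectHead (isStripWalk_reflectHead (isStripWalk_reflectHead hw h₁) h₂) h₃
  refine ⟨p₁, p₂, p₃, u₃, hu₃, ?_, by simp [u₃, u₂, u₁], by simp [u₃, u₂, u₁]⟩
  obtain rfl : p₄ = 0 := by
    by_contra hne
    have l₄ : 0 < p₄ := Fin.pos_iff_ne_zero.mpr hne
    have l₃ := h₃.lt_of_reflectHead h₄ l₄
    have l₂ := h₂.lt_of_reflectHead h₃ (l₄.trans l₃)
    have l₁ := h₁.lt_of_reflectHead h₂ (l₄.trans (l₃.trans l₂))
    -- On the prefix before a pivot, each reflection flips the sign of `x_j - x_0`.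
    have a₄ : (u₃ p₄).1 < (u₃ 0).1 := h₄.2 0 l₄
    have a₃ : (u₂ p₃).1 < (u₂ 0).1 := h₃.2 0 (l₄.trans l₃)
    have a₂ : (u₁ p₂).1 < (u₁ 0).1 := h₂.2 0 (l₄.trans (l₃.trans l₂))
    have a₁ : (w p₁).1 < (w 0).1 := h₁.2 0 (l₄.trans (l₃.trans (l₂.trans l₁)))
    have e₃₄ : (u₃ p₄).1 - (u₃ 0).1 = (u₂ 0).1 - (u₂ p₄).1 :=
      reflectHead_fst_sub_fst _ (l₄.trans l₃) l₃
    have e₂₄ : (u₂ p₄).1 - (u₂ 0).1 = (u₁ 0).1 - (u₁ p₄).1 :=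
      reflectHead_fst_sub_fst _ (l₄.trans (l₃.trans l₂)) (l₃.trans l₂)
    have e₁₄ : (u₁ p₄).1 - (u₁ 0).1 = (w 0).1 - (w p₄).1 :=
      reflectHead_fst_sub_fst _ (l₄.trans (l₃.trans (l₂.trans l₁))) (l₃.trans (l₂.trans l₁))
    have e₂₃ : (u₂ p₃).1 - (u₂ 0).1 = (u₁ 0).1 - (u₁ p₃).1 :=
      reflectHead_fst_sub_fst _ (l₄.trans (l₃.trans l₂)) l₂
    have e₁₃ : (u₁ p₃).1 - (u₁ 0).1 = (w 0).1 - (w p₃).1 :=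
      reflectHead_fst_sub_fst _ (l₄.trans (l₃.trans (l₂.trans l₁))) (l₂.trans l₁)
    have e₁₂ : (u₁ p₂).1 - (u₁ 0).1 = (w 0).1 - (w p₂).1 :=
      reflectHead_fst_sub_fst _ (l₄.trans (l₃.trans (l₂.trans l₁))) l₁
    exact hw.not_alternating (Fin.zero_le p₄) l₃.le l₂.le l₁.le (c := (w 0).1) le_rfl
      (by linarith) (by linarith) (by linarith) a₁.le
  exact h₄.1

theorem exists_reflectTail_eq (hw : IsStripWalk (-1) 1 n w)
    (hmin : ∀ j ≠ 0, (w 0).1 < (w j).1) :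
    ∃ r₁ r₂ : Fin (n + 1), ∃ v, IsStripWalk (-1) 1 n v ∧ (∀ j ≠ 0, (v 0).1 < (v j).1) ∧
      (∀ j, (v j).1 ≤ (v (Fin.last n)).1) ∧ v 0 = w 0 ∧
      reflectTail r₁ (reflectTail r₂ v) = w := by
  obtain ⟨r₁, h₁⟩ := exists_isLastArgmax fun j => (w j).1
  set v₁ := reflectTail r₁ w
  obtain ⟨r₂, h₂⟩ := exists_isLastArgmax fun j => (v₁ j).1
  set v₂ := reflectTail r₂ v₁
  obtain ⟨r₃, h₃⟩ := exists_isLastArgmax fun j => (v₂ j).1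
  refine ⟨r₁, r₂, v₂, isStripWalk_reflectTail (isStripWalk_reflectTail hw h₁) h₂,
    h₂.reflectTail_fst_zero_lt (h₁.reflectTail_fst_zero_lt hmin), ?_,
    by simp only [v₂, v₁, reflectTail_of_le _ (Fin.zero_le _)], by simp [v₂, v₁]⟩
  obtain rfl : r₃ = Fin.last n := by
    by_contra hne
    have l₃ : r₃ < Fin.last n := Fin.lt_last_iff_ne_last.mpr hne
    have l₂ := h₂.lt_of_reflectTail h₃ l₃
    have l₁ := h₁.lt_of_reflectTail h₂ (l₂.trans l₃)
    -- On the suffix after a pivot, each reflection flips the sign of `x_j - x_n`.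
    have a₃ : (v₂ (Fin.last n)).1 < (v₂ r₃).1 := h₃.2 _ l₃
    have a₂ : (v₁ (Fin.last n)).1 < (v₁ r₂).1 := h₂.2 _ (l₂.trans l₃)
    have a₁ : (w (Fin.last n)).1 < (w r₁).1 := h₁.2 _ (l₁.trans (l₂.trans l₃))
    have a₀ : (w 0).1 < (w (Fin.last n)).1 :=
      hmin _ ((Fin.zero_le r₁).trans_lt (l₁.trans (l₂.trans l₃))).ne'
    have e₂₃ : (v₂ (Fin.last n)).1 - (v₂ r₃).1 = (v₁ r₃).1 - (v₁ (Fin.last n)).1 :=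
      reflectTail_fst_sub_fst _ l₂ (l₂.trans l₃)
    have e₁₃ : (v₁ r₃).1 - (v₁ (Fin.last n)).1 = (w (Fin.last n)).1 - (w r₃).1 :=
      reflectTail_fst_sub_fst _ (l₁.trans (l₂.trans l₃)) (l₁.trans l₂)
    have e₁₂ : (v₁ (Fin.last n)).1 - (v₁ r₂).1 = (w r₂).1 - (w (Fin.last n)).1 :=
      reflectTail_fst_sub_fst _ l₁ (l₁.trans (l₂.trans l₃))
    exact hw.not_alternating (Fin.zero_le r₁) l₁.le l₂.le l₃.le (c := (w (Fin.last n)).1)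
      a₀.le a₁ (by linarith) (by linarith) le_rfl
  exact h₃.1

end IsStripWalk

section Assembly

variable {a b : ℤ} {n : ℕ}

def extendLeft (w : Fin (n + 1) → ℤ × ℤ) : Fin (n + 2) → ℤ × ℤ :=
  Fin.cons ((w 0).1 - 1, (w 0).2) w

theorem extendLeft_fst_zero_lt {w : Fin (n + 1) → ℤ × ℤ} (hmin : ∀ j, (w 0).1 ≤ (w j).1) :
    ∀ j ≠ 0, (extendLeft w 0).1 < (extendLeft w j).1 := by
  intro j hj
  obtain ⟨j, rfl⟩ := Fin.exists_succ_eq.mpr hj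
  simp only [extendLeft, Fin.cons_zero, Fin.cons_succ]
  linarith [hmin j]

theorem isStripWalk_extendLeft {w : Fin (n + 1) → ℤ × ℤ} (hw : IsStripWalk a b n w)
    (hmin : ∀ j, (w 0).1 ≤ (w j).1) : IsStripWalk a b (n + 1) (extendLeft w) where
  injective := Fin.cons_injective_iff.mpr
    ⟨fun ⟨j, hj⟩ => by linarith [hmin j, congrArg Prod.fst hj], hw.injective⟩
  mem_strip := Fin.cases (hw.mem_strip 0) hw.mem_strip
  step := Fin.cases (by simp [extendLeft]) fun i => by
    simpa [extendLeft, ← Fin.succ_castSucc] using hw.step i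

theorem IsSAW.abs_fst_add_abs_snd_le {w : Fin (n + 1) → ℤ × ℤ} (hw : IsSAW a b n w)
    (i : Fin (n + 1)) : |(w i).1| + |(w i).2| ≤ i := by
  induction i using Fin.induction with
  | zero => simp [hw.1]
  | succ i ih =>
    have := hw.2.2.2 i
    have := abs_sub_abs_le_abs_sub (w i.succ).1 (w i.castSucc).1
    have := abs_sub_abs_le_abs_sub (w i.succ).2 (w i.castSucc).2
    rw [Fin.val_castSucc] at ih
    push_cast [Fin.val_succ]
    linarith

theorem finite_isBridge (a b : ℤ) (n : ℕ) :
    Finite {w : Fin (n + 1) → ℤ × ℤ // IsBridge a b n w} := by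
  refine Set.Finite.to_subtype <| (Set.Finite.pi fun _ =>
    (Set.finite_Icc (-(n : ℤ)) n).prod (Set.finite_Icc (-(n : ℤ)) n)).subset fun w hw i _ => ?_
  have hi := hw.1.abs_fst_add_abs_snd_le i
  have hn : (i : ℤ) ≤ n := by exact_mod_cast Fin.is_le i
  simp only [Set.mem_prod, Set.mem_Icc]
  refine ⟨⟨?_, ?_⟩, ?_, ?_⟩ <;>
    linarith [abs_nonneg (w i).1, abs_nonneg (w i).2, neg_abs_le (w i).1, le_abs_self (w i).1,
      neg_abs_le (w i).2, le_abs_self (w i).2]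

theorem isBridge_sub_apply_zero {v : Fin (n + 1) → ℤ × ℤ} (hv : IsStripWalk a b n v)
    (hv₀ : (v 0).2 = 0) (hmin : ∀ j ≠ 0, (v 0).1 < (v j).1)
    (hmax : ∀ j, (v j).1 ≤ (v (Fin.last n)).1) : IsBridge a b n fun j => v j - v 0 := by
  refine ⟨isSAW_iff.mpr ⟨sub_self _, by simpa [hv₀] using hv.sub_const (v 0)⟩, fun j hj => ?_⟩
  simp only [Prod.fst_sub, sub_self, Prod.fst_zero]
  exact ⟨by linarith [hmin j hj], by linarith [hmax j]⟩

def refold (v : Fin (n + 2) → ℤ × ℤ) (p₁ p₂ p₃ : Fin (n + 1)) (r₁ r₂ : Fin (n + 2)) :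
    Fin (n + 1) → ℤ × ℤ :=
  let u := reflectHead p₁ (reflectHead p₂ (reflectHead p₃
    (Fin.tail (reflectTail r₁ (reflectTail r₂ v)))))
  fun j => u j - u 0

theorem exists_isBridge_refold_eq {w : Fin (n + 1) → ℤ × ℤ} (hw : IsSAW (-1) 1 n w) :
    ∃ v, IsBridge (-1) 1 (n + 1) v ∧ ∃ p₁ p₂ p₃ r₁ r₂, refold v p₁ p₂ p₃ r₁ r₂ = w := by
  obtain ⟨hw₀, hw⟩ := isSAW_iff.mp hw
  obtain ⟨p₁, p₂, p₃, u, hu, humin, hu₀, rfl⟩ := hw.exists_reflectHead_eq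
  obtain ⟨r₁, r₂, v, hv, hvmin, hvmax, hv₀, hvu⟩ :=
    (isStripWalk_extendLeft hu humin).exists_reflectTail_eq (extendLeft_fst_zero_lt humin)
  refine ⟨fun j => v j - v 0, isBridge_sub_apply_zero hv ?_ hvmin hvmax, p₁, p₂, p₃, r₁, r₂, ?_⟩
  · simp [hv₀, extendLeft, hu₀, hw₀]
  · have htail : Fin.tail (fun j => extendLeft u j - v 0) = fun j => u j - v 0 := rfl
    funext j
    simp only [refold, reflectTail_sub, hvu, htail, reflectHead_sub, sub_sub_sub_cancel_right]
    simp [hw₀]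

end Assembly

theorem stmt_13_general (n : ℕ) :
    numSAW (-1) 1 n ≤ numBridge (-1) 1 (n + 1) *
      ((n + 1) + 2 * (n + 1) ^ 2 + 3 * (n + 1) ^ 3 + 2 * (n + 1) ^ 4 + (n + 1) ^ 5) := by
  have := finite_isBridge (-1) 1 (n + 1)
  have hcount : numSAW (-1) 1 n ≤ numBridge (-1) 1 (n + 1) *
      Nat.card ((Fin (n + 1) × Fin (n + 1) × Fin (n + 1)) × Fin (n + 2) × Fin (n + 2)) :=
    card_le_card_mul_card_of_forall_exists
      (fun v d => refold v.1 d.1.1 d.1.2.1 d.1.2.2 d.2.1 d.2.2) fun w hw => by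
        obtain ⟨v, hv, p₁, p₂, p₃, r₁, r₂, rfl⟩ := exists_isBridge_refold_eq hw
        exact ⟨⟨v, hv⟩, ((p₁, p₂, p₃), r₁, r₂), rfl⟩
  simp only [Nat.card_eq_fintype_card, Fintype.card_prod, Fintype.card_fin] at hcount
  exact hcount.trans (Nat.mul_le_mul_left _ (by ring_nf; omega))

/-- For `n ≥ 1`,
`c_{[−1,1],n} ≤ b_{[−1,1],n+1}·((n+1) + 2(n+1)² + 3(n+1)³ + 2(n+1)⁴ + (n+1)⁵)`. -/
theorem stmt_13 (n : ℕ) (hn : 1 ≤ n) :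
    numSAW (-1) 1 n ≤ numBridge (-1) 1 (n + 1) *
      ((n + 1) + 2 * (n + 1) ^ 2 + 3 * (n + 1) ^ 3 + 2 * (n + 1) ^ 4 + (n + 1) ^ 5) :=
  stmt_13_general n
end

section
/- For every integer n ≥ 1, the number of n-step self-avoiding walks on the lattice strip ℤ × {−1,0,1,2} satisfies c_{[−1,2],n} ≤ b_{[−1,2],n+1} · ((n+1) + 2(n+1)² + 3(n+1)³ + 4(n+1)⁴ + 3(n+1)⁵ + 2(n+1)⁶ + (n+1)⁷), where b_{[−1,2],n+1} is the number of (n+1)-step bridges on ℤ × {−1,0,1,2}. -/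
open Filter Finset

/-!
Hammersley–Welsh unfolding in a strip of width `W = b - a + 1`. Reflecting the part of a walk after
its first rightmost point pushes the endpoint further right; repeating this until the endpoint is
rightmost, and then symmetrically reflecting the part before the last leftmost point until the start
is leftmost, produces a walk whose start is leftmost and whose end is rightmost, i.e. (after one
extra first step) an `(n + 1)`-step bridge. The walk is recovered from the bridge and the two lists
of reflection points.

The number of reflections is bounded by counting crossings of the two vertical lines next to the
endpoint (resp. the start): every reflection forces new crossings, while self-avoidance allows at
most one crossing of a line per row, i.e. `W` crossings. This gives at most `W` reflections of the
first kind and `W - 1` of the second, each at one of `n` positions, hence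
`c_n ≤ b_{n+1} (∑_{j ≤ W} n^j) (∑_{j < W} n^j)`; for `W = 4` these sums multiply to at most the
polynomial of the statement.
-/

namespace HammersleyWelsh

variable {a b c : ℤ} {n i j : ℕ} {u v : ℕ → ℤ × ℤ}

-- An `n`-step walk in the strip, indexed by `ℕ` (values after `n` are irrelevant) and not pinned
-- to the origin, so that the class is stable under the reflections and translations used below.
structure IsStripWalk (a b : ℤ) (n : ℕ) (u : ℕ → ℤ × ℤ) : Prop where
  injOn : Set.InjOn u (Set.Iic n)
  mem_strip : ∀ i ≤ n, a ≤ (u i).2 ∧ (u i).2 ≤ b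
  step : ∀ i < n, |(u (i + 1)).1 - (u i).1| + |(u (i + 1)).2 - (u i).2| = 1

namespace IsStripWalk

theorem abs_fst_sub_le_one (hu : IsStripWalk a b n u) (hi : i < n) :
    |(u (i + 1)).1 - (u i).1| ≤ 1 := by
  linarith [hu.step i hi, abs_nonneg ((u (i + 1)).2 - (u i).2)]

theorem abs_fst_sub_fst_zero_le (hu : IsStripWalk a b n u) (hi : i ≤ n) :
    |(u i).1 - (u 0).1| ≤ i := by
  induction i with
  | zero => simp
  | succ i ih =>
    have hstep := hu.abs_fst_sub_le_one (i := i) (by omega)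
    have := abs_sub_le (u (i + 1)).1 (u i).1 (u 0).1
    push_cast
    linarith [ih (by omega)]

end IsStripWalk

-- `p` and `q` lie on opposite sides of the vertical line `x = c + 1/2`.
def Separates (c : ℤ) (p q : ℤ × ℤ) : Prop :=
  p.1 ≤ c ∧ c < q.1 ∨ q.1 ≤ c ∧ c < p.1

theorem IsStripWalk.snd_eq_of_separates (hu : IsStripWalk a b n u) (hi : i < n)
    (h : Separates c (u i) (u (i + 1))) : (u (i + 1)).2 = (u i).2 := by
  have hx : 1 ≤ |(u (i + 1)).1 - (u i).1| := by
    rw [le_abs]; simp only [Separates] at h; omega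
  have := hu.step i hi
  have : |(u (i + 1)).2 - (u i).2| = 0 := by
    linarith [abs_nonneg ((u (i + 1)).2 - (u i).2)]
  rwa [abs_eq_zero, sub_eq_zero] at this

open Classical in
noncomputable def numCrossings (c : ℤ) (i j : ℕ) (u : ℕ → ℤ × ℤ) : ℕ :=
  #{k ∈ Ico i j | Separates c (u k) (u (k + 1))}

theorem numCrossings_add {k : ℕ} (hij : i ≤ j) (hjk : j ≤ k) :
    numCrossings c i j u + numCrossings c j k u = numCrossings c i k u := by
  classical
  rw [numCrossings, numCrossings, numCrossings, ← card_union_of_disjoint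
    (disjoint_filter_filter (Ico_disjoint_Ico_consecutive i j k)), ← filter_union,
    Ico_union_Ico_eq_Ico hij hjk]

theorem one_le_numCrossings (hij : i ≤ j) (h : Separates c (u i) (u j)) :
    1 ≤ numCrossings c i j u := by
  classical
  induction j, hij using Nat.le_induction with
  | base => simp only [Separates] at h; omega
  | succ j hij ih =>
    rw [← numCrossings_add hij (by omega : j ≤ j + 1)]
    by_cases hj : Separates c (u j) (u (j + 1))
    · have : 1 ≤ numCrossings c j (j + 1) u :=
        card_pos.mpr ⟨j, mem_filter.mpr ⟨by simp, hj⟩⟩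
      omega
    · have : Separates c (u i) (u j) := by simp only [Separates] at h hj ⊢; omega
      have := ih this
      omega

theorem numCrossings_eq_zero (h : ∀ k, i ≤ k → k ≤ j → c < (u k).1) :
    numCrossings c i j u = 0 := by
  classical
  refine card_eq_zero.mpr (filter_eq_empty_iff.mpr fun k hk hsep => ?_)
  rw [mem_Ico] at hk
  have := h k hk.1 hk.2.le
  have := h (k + 1) (by omega) hk.2
  simp only [Separates] at hsep
  omega

-- A crossing step is horizontal, so it is determined by its height; self-avoidance then leaves
-- at most one crossing of each line per row.
theorem IsStripWalk.numCrossings_le (hu : IsStripWalk a b n u) (hj : j ≤ n) :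
    numCrossings c i j u ≤ (b + 1 - a).toNat := by
  classical
  rw [← Int.card_Icc]
  refine card_le_card_of_injOn (fun k => (u k).2) (fun k hk => ?_) (fun k hk k' hk' hy => ?_)
  · rw [mem_coe, mem_filter, mem_Ico] at hk
    simpa using hu.mem_strip k (by omega)
  · rw [mem_coe, mem_filter, mem_Ico] at hk hk'
    simp only [Separates] at hk hk' hy
    have hyk := hu.snd_eq_of_separates (by omega) hk.2
    have hyk' := hu.snd_eq_of_separates (by omega) hk'.2
    have hx := hu.abs_fst_sub_le_one (i := k) (by omega)
    have hx' := hu.abs_fst_sub_le_one (i := k') (by omega)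
    rw [abs_le] at hx hx'
    have inj {i j : ℕ} (hi : i ≤ n) (hj : j ≤ n) (h : u i = u j) : i = j := hu.injOn hi hj h
    by_cases hkk' : (u k).1 = (u k').1
    · exact inj (by omega) (by omega) (Prod.ext hkk' hy)
    · have := inj (i := k) (j := k' + 1) (by omega) (by omega) (Prod.ext (by omega) (by omega))
      have := inj (i := k + 1) (j := k') (by omega) (by omega) (Prod.ext (by omega) (by omega))
      omega

section Reflection

variable {p : ℕ} {S : ℕ → Prop} [DecidablePred S]

def reflectOn (S : ℕ → Prop) [DecidablePred S] (p : ℕ) (u : ℕ → ℤ × ℤ) (i : ℕ) : ℤ × ℤ :=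
  if S i then (2 * (u p).1 - (u i).1, (u i).2) else u i

theorem reflectOn_of_pos (h : S i) : reflectOn S p u i = (2 * (u p).1 - (u i).1, (u i).2) :=
  if_pos h

theorem reflectOn_of_neg (h : ¬S i) : reflectOn S p u i = u i :=
  if_neg h

theorem reflectOn_self (hp : S p) : reflectOn S p u p = u p := by
  rw [reflectOn_of_pos hp, two_mul, add_sub_cancel_right]

theorem snd_reflectOn : (reflectOn S p u i).2 = (u i).2 := by
  unfold reflectOn; split_ifs <;> rfl

theorem reflectOn_reflectOn (hp : S p) : reflectOn S p (reflectOn S p u) = u := by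
  funext i
  by_cases hi : S i
  · rw [reflectOn_of_pos hi, reflectOn_self hp, reflectOn_of_pos hi, sub_sub_cancel]
  · rw [reflectOn_of_neg hi, reflectOn_of_neg hi]

theorem reflectOn_add_const (d : ℤ) :
    reflectOn S p (fun i => u i + (d, 0)) = fun i => reflectOn S p u i + (d, 0) := by
  funext i
  by_cases hi : S i
  · simp only [reflectOn_of_pos hi, Prod.fst_add, Prod.snd_add, Prod.mk_add_mk]
    congr 1
    ring
  · simp only [reflectOn_of_neg hi]

theorem reflectOn_eqOn (h : Set.EqOn u v (Set.Iic n)) (hp : p ≤ n) :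
    Set.EqOn (reflectOn S p u) (reflectOn S p v) (Set.Iic n) := fun i hi => by
  simp only [reflectOn, h hi, h (Set.mem_Iic.mpr hp)]

theorem numCrossings_reflectOn (h : ∀ k, i ≤ k → k < j → S k ∧ S (k + 1)) :
    numCrossings c i j (reflectOn S p u) = numCrossings (2 * (u p).1 - c - 1) i j u := by
  classical
  unfold numCrossings
  congr 1
  refine filter_congr fun k hk => ?_
  rw [mem_Ico] at hk
  obtain ⟨h1, h2⟩ := h k hk.1 hk.2
  simp only [Separates, reflectOn_of_pos h1, reflectOn_of_pos h2]
  omega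

-- `hsep`: no reflected point lands in the column of a point that stays; `hS`: a step joins a
-- reflected and a fixed point only at the pivot, which the reflection does not move.
theorem IsStripWalk.reflectOn (hu : IsStripWalk a b n u) (hp : S p)
    (hS : ∀ i < n, i ≠ p → i + 1 ≠ p → (S i ↔ S (i + 1)))
    (hsep : ∀ i ≤ n, ∀ j ≤ n, S i → ¬S j → (u i).1 + (u j).1 ≠ 2 * (u p).1) :
    IsStripWalk a b n (reflectOn S p u) where
  injOn i hi j hj h := by
    refine hu.injOn hi hj (Prod.ext ?_ (by simpa only [snd_reflectOn] using congrArg Prod.snd h))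
    have hx := congrArg Prod.fst h
    by_cases hSi : S i <;> by_cases hSj : S j
    · rw [reflectOn_of_pos hSi, reflectOn_of_pos hSj] at hx
      simpa using hx
    · rw [reflectOn_of_pos hSi, reflectOn_of_neg hSj] at hx
      exact absurd (by simp only at hx; omega) (hsep i hi j hj hSi hSj)
    · rw [reflectOn_of_neg hSi, reflectOn_of_pos hSj] at hx
      exact absurd (by simp only at hx; omega) (hsep j hj i hi hSj hSi)
    · rwa [reflectOn_of_neg hSi, reflectOn_of_neg hSj] at hx
  mem_strip i hi := by simpa only [snd_reflectOn] using hu.mem_strip i hi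
  step i hi := by
    by_cases hSi : S i <;> by_cases hSi1 : S (i + 1)
    · rw [reflectOn_of_pos hSi, reflectOn_of_pos hSi1, ← abs_neg]
      convert hu.step i hi using 3
      ring
    · obtain rfl : i = p := by
        by_contra hne
        exact hSi1 ((hS i hi hne fun h => hSi1 (h ▸ hp)).mp hSi)
      rw [reflectOn_self hp, reflectOn_of_neg hSi1]
      exact hu.step i hi
    · obtain rfl : i + 1 = p := by
        by_contra hne
        exact hSi ((hS i hi (fun h => hSi (h ▸ hp)) hne).mpr hSi1)
      rw [reflectOn_self hp, reflectOn_of_neg hSi]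
      exact hu.step i hi
    · rw [reflectOn_of_neg hSi, reflectOn_of_neg hSi1]
      exact hu.step i hi

end Reflection

section Iteration

variable {α : Type*} (done : α → Prop) (pivot : α → ℕ) (op : ℕ → α → α)

open Classical in
noncomputable def iterateUntil : ℕ → α → α × List ℕ
  | 0, x => (x, [])
  | fuel + 1, x =>
    if done x then (x, [])
    else
      let r := iterateUntil fuel (op (pivot x) x)
      (r.1, pivot x :: r.2)

variable {done pivot op} {fuel k : ℕ} {x : α}

theorem iterateUntil_of_done (h : done x) : iterateUntil done pivot op fuel x = (x, []) := by
  cases fuel <;> simp [iterateUntil, h]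

theorem iterateUntil_succ_of_not_done (h : ¬done x) :
    iterateUntil done pivot op (fuel + 1) x =
      ((iterateUntil done pivot op fuel (op (pivot x) x)).1,
        pivot x :: (iterateUntil done pivot op fuel (op (pivot x) x)).2) := by
  simp [iterateUntil, h]

theorem foldr_iterateUntil (hop : ∀ p, Function.Involutive (op p)) :
    (iterateUntil done pivot op fuel x).2.foldr op (iterateUntil done pivot op fuel x).1 = x := by
  induction fuel generalizing x with
  | zero => rfl
  | succ fuel ih =>
    by_cases h : done x
    · rw [iterateUntil_of_done h]; rfl
    · rw [iterateUntil_succ_of_not_done h, List.foldr_cons, ih, hop]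

theorem succ_le_length_iterateUntil
    (h : k + 1 ≤ (iterateUntil done pivot op fuel x).2.length) :
    ¬done x ∧ ∃ fuel', k ≤ (iterateUntil done pivot op fuel' (op (pivot x) x)).2.length := by
  cases fuel with
  | zero => simp [iterateUntil] at h
  | succ fuel =>
    by_cases hx : done x
    · simp [iterateUntil_of_done hx] at h
    · rw [iterateUntil_succ_of_not_done hx, List.length_cons] at h
      exact ⟨hx, fuel, by omega⟩

variable (P : α → Prop)

theorem iterateUntil_induction (hP : ∀ x, P x → ¬done x → P (op (pivot x) x)) (hx : P x) :
    P (iterateUntil done pivot op fuel x).1 := by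
  induction fuel generalizing x with
  | zero => exact hx
  | succ fuel ih =>
    by_cases h : done x
    · rwa [iterateUntil_of_done h]
    · rw [iterateUntil_succ_of_not_done h]
      exact ih (hP x hx h)

theorem forall_mem_iterateUntil (hP : ∀ x, P x → ¬done x → P (op (pivot x) x))
    {Q : ℕ → Prop} (hQ : ∀ x, P x → ¬done x → Q (pivot x))
    (hx : P x) : ∀ q ∈ (iterateUntil done pivot op fuel x).2, Q q := by
  induction fuel generalizing x with
  | zero => simp [iterateUntil]
  | succ fuel ih =>
    by_cases h : done x
    · simp [iterateUntil_of_done h]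
    · rw [iterateUntil_succ_of_not_done h, List.forall_mem_cons]
      exact ⟨hQ x hx h, ih (hP x hx h)⟩

theorem done_iterateUntil (hP : ∀ x, P x → ¬done x → P (op (pivot x) x)) (μ : α → ℤ) (N : ℤ)
    (hμ : ∀ x, P x → μ x ≤ N) (hinc : ∀ x, P x → ¬done x → μ x < μ (op (pivot x) x))
    (hx : P x) (hfuel : N < fuel + μ x) :
    done (iterateUntil done pivot op fuel x).1 := by
  induction fuel generalizing x with
  | zero => have := hμ x hx; omega
  | succ fuel ih =>
    by_cases h : done x
    · rwa [iterateUntil_of_done h]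
    · rw [iterateUntil_succ_of_not_done h]
      have := hinc x hx h
      exact ih (hP x hx h) (by push_cast at hfuel; omega)

end Iteration

section Unfolding

variable {k s t fuel : ℕ}

-- The displacement `x_n - x_0` of a strip walk lies in `[-n, n]`, so `2 * n + 1` steps that
-- each increase it must reach `done`.
theorem done_iterateUntil_of_isStripWalk {done : (ℕ → ℤ × ℤ) → Prop} {pivot : (ℕ → ℤ × ℤ) → ℕ}
    {op : ℕ → (ℕ → ℤ × ℤ) → ℕ → ℤ × ℤ}
    (hP : ∀ v, IsStripWalk a b n v → ¬done v → IsStripWalk a b n (op (pivot v) v))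
    (hinc : ∀ v, ¬done v → (v n).1 - (v 0).1 < (op (pivot v) v n).1 - (op (pivot v) v 0).1)
    (hu : IsStripWalk a b n u) : done (iterateUntil done pivot op (2 * n + 1) u).1 := by
  refine done_iterateUntil _ hP (fun v => (v n).1 - (v 0).1) n
    (fun v hv => (abs_le.mp (hv.abs_fst_sub_fst_zero_le le_rfl)).2) (fun v _ => hinc v) hu ?_
  have := (abs_le.mp (hu.abs_fst_sub_fst_zero_le (le_refl n))).1
  push_cast
  omega

def EndsAtMax (n : ℕ) (u : ℕ → ℤ × ℤ) : Prop :=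
  ∀ i ≤ n, (u i).1 ≤ (u n).1

noncomputable def firstMaxIdx (n : ℕ) (u : ℕ → ℤ × ℤ) : ℕ :=
  sInf {i | i ≤ n ∧ ∀ j ≤ n, (u j).1 ≤ (u i).1}

theorem firstMaxIdx_mem : firstMaxIdx n u ≤ n ∧ ∀ j ≤ n, (u j).1 ≤ (u (firstMaxIdx n u)).1 := by
  refine Nat.sInf_mem (s := {i | i ≤ n ∧ ∀ j ≤ n, (u j).1 ≤ (u i).1}) ?_
  obtain ⟨i, hi, hmax⟩ := exists_max_image (range (n + 1)) (fun i => (u i).1) ⟨0, by simp⟩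
  exact ⟨i, Nat.lt_succ_iff.mp (mem_range.mp hi), fun j hj => hmax j (mem_range.mpr (by omega))⟩

theorem firstMaxIdx_le : firstMaxIdx n u ≤ n :=
  firstMaxIdx_mem.1

theorem fst_le_fst_firstMaxIdx (hj : j ≤ n) : (u j).1 ≤ (u (firstMaxIdx n u)).1 :=
  firstMaxIdx_mem.2 j hj

theorem fst_lt_fst_firstMaxIdx (hi : i < firstMaxIdx n u) : (u i).1 < (u (firstMaxIdx n u)).1 := by
  have := Nat.notMem_of_lt_sInf hi
  simp only [Set.mem_ofPred_eq, not_and, not_forall, not_le] at this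
  obtain ⟨j, hj, hlt⟩ := this (hi.le.trans firstMaxIdx_le)
  exact hlt.trans_le (fst_le_fst_firstMaxIdx hj)

theorem fst_lt_fst_firstMaxIdx_of_not_endsAtMax (h : ¬EndsAtMax n u) :
    (u n).1 < (u (firstMaxIdx n u)).1 := by
  simp only [EndsAtMax, not_forall, not_le] at h
  obtain ⟨i, hi, hlt⟩ := h
  exact hlt.trans_le (fst_le_fst_firstMaxIdx hi)

theorem firstMaxIdx_lt (h : ¬EndsAtMax n u) : firstMaxIdx n u < n := by
  refine firstMaxIdx_le.lt_of_ne fun he => ?_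
  have := fst_lt_fst_firstMaxIdx_of_not_endsAtMax h
  rw [he] at this
  exact this.false

def reflectFrom (t : ℕ) : (ℕ → ℤ × ℤ) → ℕ → ℤ × ℤ :=
  reflectOn (t ≤ ·) t

theorem reflectFrom_of_le (h : t ≤ i) : reflectFrom t u i = (2 * (u t).1 - (u i).1, (u i).2) :=
  reflectOn_of_pos h

theorem reflectFrom_of_lt (h : i < t) : reflectFrom t u i = u i :=
  reflectOn_of_neg (not_le.mpr h)

theorem reflectFrom_self : reflectFrom t u t = u t :=
  reflectOn_self le_rfl

theorem reflectFrom_zero : reflectFrom t u 0 = u 0 := by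
  rcases t.eq_zero_or_pos with rfl | ht
  · exact reflectFrom_self
  · exact reflectFrom_of_lt ht

theorem IsStripWalk.reflectFrom_firstMaxIdx (hu : IsStripWalk a b n u) :
    IsStripWalk a b n (reflectFrom (firstMaxIdx n u) u) :=
  hu.reflectOn le_rfl (fun i _ hi hi1 => by omega) fun i hi j _ hti hjt => by
    have := fst_le_fst_firstMaxIdx (u := u) hi
    have := fst_lt_fst_firstMaxIdx (not_le.mp hjt)
    omega

theorem firstMaxIdx_le_firstMaxIdx_reflectFrom :
    firstMaxIdx n u ≤ firstMaxIdx n (reflectFrom (firstMaxIdx n u) u) := by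
  by_contra! hlt
  have h1 := fst_le_fst_firstMaxIdx (u := reflectFrom (firstMaxIdx n u) u)
    (firstMaxIdx_le (n := n) (u := u))
  rw [reflectFrom_of_lt hlt, reflectFrom_self] at h1
  exact (fst_lt_fst_firstMaxIdx hlt).not_ge h1

-- With `t` the first maximum, the reflected walk ends at `2 x_t - x_n`; if that is not its maximum,
-- its new first maximum `t' ≥ t` is the reflection of a point with `x_{t'} < x_n`.
theorem fst_firstMaxIdx_reflectFrom_lt (h : ¬EndsAtMax n (reflectFrom (firstMaxIdx n u) u)) :
    (u (firstMaxIdx n (reflectFrom (firstMaxIdx n u) u))).1 < (u n).1 := by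
  have hlt := fst_lt_fst_firstMaxIdx_of_not_endsAtMax h
  rw [reflectFrom_of_le firstMaxIdx_le_firstMaxIdx_reflectFrom, reflectFrom_of_le firstMaxIdx_le]
    at hlt
  simp only at hlt
  omega

theorem numCrossings_reflectFrom_add_one_le {t' : ℕ} {c' : ℤ} (htt' : t ≤ t') (ht'n : t' ≤ n)
    (hc : (u t').1 ≤ c) (hct : c < (u t).1) (hcc' : c + c' + 1 = 2 * (u t).1) :
    numCrossings c' t' n (reflectFrom t u) + 1 ≤ numCrossings c t n u := by
  rw [← numCrossings_add htt' ht'n, reflectFrom,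
    numCrossings_reflectOn fun k hk _ => ⟨by omega, by omega⟩,
    show 2 * (u t).1 - c' - 1 = c by omega]
  have := one_le_numCrossings (c := c) htt' (Or.inr ⟨hc, hct⟩)
  omega

noncomputable def unfoldTail (n : ℕ) : ℕ → (ℕ → ℤ × ℤ) → (ℕ → ℤ × ℤ) × List ℕ :=
  iterateUntil (EndsAtMax n) (firstMaxIdx n) reflectFrom

-- Each unfolding adds a crossing of both lines next to the endpoint, which the reflection
-- then swaps; hence the `2k + 1` crossings after the first maximum.
theorem two_mul_add_one_le_numCrossings (h : k + 1 ≤ (unfoldTail n fuel u).2.length) :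
    2 * k + 1 ≤ numCrossings ((u n).1 - 1) (firstMaxIdx n u) n u +
      numCrossings (u n).1 (firstMaxIdx n u) n u := by
  induction k generalizing fuel u with
  | zero =>
    obtain ⟨hnd, -⟩ := succ_le_length_iterateUntil h
    have := one_le_numCrossings (c := (u n).1) firstMaxIdx_le
      (Or.inr ⟨le_rfl, fst_lt_fst_firstMaxIdx_of_not_endsAtMax hnd⟩)
    omega
  | succ k ih =>
    obtain ⟨hnd, fuel', hlen⟩ := succ_le_length_iterateUntil h
    have hnd' := (succ_le_length_iterateUntil hlen).1
    have ih := ih hlen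
    have hlt := fst_firstMaxIdx_reflectFrom_lt (u := u) hnd'
    have hM := fst_lt_fst_firstMaxIdx_of_not_endsAtMax hnd
    have hend : (reflectFrom (firstMaxIdx n u) u n).1 = 2 * (u (firstMaxIdx n u)).1 - (u n).1 := by
      rw [reflectFrom_of_le firstMaxIdx_le]
    have h1 := numCrossings_reflectFrom_add_one_le (u := u) (t := firstMaxIdx n u)
      (c := (u n).1 - 1) (c' := (reflectFrom (firstMaxIdx n u) u n).1)
      firstMaxIdx_le_firstMaxIdx_reflectFrom firstMaxIdx_le (by omega) (by omega) (by omega)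
    have h2 := numCrossings_reflectFrom_add_one_le (u := u) (t := firstMaxIdx n u)
      (c := (u n).1) (c' := (reflectFrom (firstMaxIdx n u) u n).1 - 1)
      firstMaxIdx_le_firstMaxIdx_reflectFrom firstMaxIdx_le (by omega) hM (by omega)
    omega

theorem isStripWalk_unfoldTail (hu : IsStripWalk a b n u) :
    IsStripWalk a b n (unfoldTail n fuel u).1 :=
  iterateUntil_induction _ (fun _ hv _ => hv.reflectFrom_firstMaxIdx) hu

theorem unfoldTail_zero : (unfoldTail n fuel u).1 0 = u 0 :=
  iterateUntil_induction (fun v : ℕ → ℤ × ℤ => v 0 = u 0)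
    (fun _ hv _ => reflectFrom_zero.trans hv) rfl

theorem foldr_unfoldTail :
    (unfoldTail n fuel u).2.foldr reflectFrom (unfoldTail n fuel u).1 = u :=
  foldr_iterateUntil fun _ _ => reflectOn_reflectOn le_rfl

theorem lt_of_mem_unfoldTail : ∀ t ∈ (unfoldTail n fuel u).2, t < n :=
  forall_mem_iterateUntil (fun _ => True) (fun _ _ _ => trivial) (fun _ _ h => firstMaxIdx_lt h)
    trivial

theorem IsStripWalk.endsAtMax_unfoldTail (hu : IsStripWalk a b n u) :
    EndsAtMax n (unfoldTail n (2 * n + 1) u).1 :=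
  done_iterateUntil_of_isStripWalk (fun _ hv _ => hv.reflectFrom_firstMaxIdx) (fun v hnd => by
    rw [reflectFrom_zero, reflectFrom_of_le firstMaxIdx_le]
    have := fst_lt_fst_firstMaxIdx_of_not_endsAtMax hnd
    simp only
    omega) hu

theorem IsStripWalk.length_unfoldTail_le (hu : IsStripWalk a b n u) :
    (unfoldTail n fuel u).2.length ≤ (b + 1 - a).toNat := by
  by_contra! h
  have := two_mul_add_one_le_numCrossings h
  have := hu.numCrossings_le (c := (u n).1 - 1) (i := firstMaxIdx n u) le_rfl
  have := hu.numCrossings_le (c := (u n).1) (i := firstMaxIdx n u) le_rfl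
  omega

def StartsAtMin (n : ℕ) (u : ℕ → ℤ × ℤ) : Prop :=
  ∀ i ≤ n, (u 0).1 ≤ (u i).1

noncomputable def lastMinIdx (n : ℕ) (u : ℕ → ℤ × ℤ) : ℕ :=
  sSup {i | i ≤ n ∧ ∀ j ≤ n, (u i).1 ≤ (u j).1}

theorem lastMinIdx_mem : lastMinIdx n u ≤ n ∧ ∀ j ≤ n, (u (lastMinIdx n u)).1 ≤ (u j).1 := by
  refine Nat.sSup_mem (s := {i | i ≤ n ∧ ∀ j ≤ n, (u i).1 ≤ (u j).1}) ?_ ⟨n, fun i hi => hi.1⟩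
  obtain ⟨i, hi, hmin⟩ := exists_min_image (range (n + 1)) (fun i => (u i).1) ⟨0, by simp⟩
  exact ⟨i, Nat.lt_succ_iff.mp (mem_range.mp hi), fun j hj => hmin j (mem_range.mpr (by omega))⟩

theorem lastMinIdx_le : lastMinIdx n u ≤ n :=
  lastMinIdx_mem.1

theorem fst_lastMinIdx_le (hj : j ≤ n) : (u (lastMinIdx n u)).1 ≤ (u j).1 :=
  lastMinIdx_mem.2 j hj

theorem fst_lastMinIdx_lt (hj : lastMinIdx n u < j) (hjn : j ≤ n) :
    (u (lastMinIdx n u)).1 < (u j).1 := by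
  have := notMem_of_csSup_lt hj ⟨n, fun i (hi : i ≤ n ∧ _) => hi.1⟩
  simp only [Set.mem_ofPred_eq, not_and, not_forall, not_le] at this
  obtain ⟨i, hi, hlt⟩ := this hjn
  exact (fst_lastMinIdx_le hi).trans_lt hlt

theorem fst_lastMinIdx_lt_of_not_startsAtMin (h : ¬StartsAtMin n u) :
    (u (lastMinIdx n u)).1 < (u 0).1 := by
  simp only [StartsAtMin, not_forall, not_le] at h
  obtain ⟨i, hi, hlt⟩ := h
  exact (fst_lastMinIdx_le hi).trans_lt hlt

theorem lastMinIdx_pos (h : ¬StartsAtMin n u) : 0 < lastMinIdx n u := by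
  refine Nat.pos_of_ne_zero fun he => ?_
  have := fst_lastMinIdx_lt_of_not_startsAtMin h
  rw [he] at this
  exact this.false

def reflectUpTo (s : ℕ) : (ℕ → ℤ × ℤ) → ℕ → ℤ × ℤ :=
  reflectOn (· ≤ s) s

theorem reflectUpTo_of_le (h : i ≤ s) : reflectUpTo s u i = (2 * (u s).1 - (u i).1, (u i).2) :=
  reflectOn_of_pos h

theorem reflectUpTo_of_lt (h : s < i) : reflectUpTo s u i = u i :=
  reflectOn_of_neg (not_le.mpr h)

theorem reflectUpTo_self : reflectUpTo s u s = u s :=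
  reflectOn_self le_rfl

theorem reflectUpTo_of_ge (hs : s ≤ i) : reflectUpTo s u i = u i := by
  rcases hs.lt_or_eq with hlt | rfl
  · exact reflectUpTo_of_lt hlt
  · exact reflectUpTo_self

theorem IsStripWalk.reflectUpTo_lastMinIdx (hu : IsStripWalk a b n u) :
    IsStripWalk a b n (reflectUpTo (lastMinIdx n u) u) :=
  hu.reflectOn le_rfl (fun i _ hi hi1 => by omega) fun i hi j hj his hjs => by
    have := fst_lastMinIdx_le (u := u) hi
    have := fst_lastMinIdx_lt (not_le.mp hjs) hj
    omega

theorem EndsAtMax.reflectUpTo_lastMinIdx (h : EndsAtMax n u) :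
    EndsAtMax n (reflectUpTo (lastMinIdx n u) u) := fun i hi => by
  rw [reflectUpTo_of_ge lastMinIdx_le]
  rcases le_or_gt i (lastMinIdx n u) with his | his
  · rw [reflectUpTo_of_le his]
    have := fst_lastMinIdx_le (u := u) hi
    have := fst_lastMinIdx_le (u := u) (le_refl n)
    simp only
    omega
  · rw [reflectUpTo_of_lt his]
    exact h i hi

theorem numCrossings_reflectUpTo_add_one_le {c' : ℤ} (hs : s ≤ n)
    (hmin : ∀ k ≤ n, (u s).1 ≤ (u k).1) (hc : (u s).1 ≤ c) (hcn : c < (u n).1)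
    (hcc' : c + c' + 1 = 2 * (u s).1) :
    numCrossings c' 0 n (reflectUpTo s u) + 1 ≤ numCrossings c 0 n u := by
  have hzero : numCrossings c' s n (reflectUpTo s u) = 0 :=
    numCrossings_eq_zero fun k hsk hkn => by
      rw [reflectUpTo_of_ge hsk]
      linarith [hmin k hkn]
  rw [← numCrossings_add (Nat.zero_le s) hs, hzero, add_zero, reflectUpTo,
    numCrossings_reflectOn fun k _ hk => ⟨hk.le, hk⟩, show 2 * (u s).1 - c' - 1 = c by omega,
    ← numCrossings_add (Nat.zero_le s) hs]
  have := one_le_numCrossings (c := c) hs (Or.inl ⟨hc, hcn⟩)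
  omega

theorem two_le_numCrossings_of_not_startsAtMin (hmax : EndsAtMax n u) (h : ¬StartsAtMin n u) :
    2 ≤ numCrossings ((u 0).1 - 1) 0 n u := by
  have hm := fst_lastMinIdx_lt_of_not_startsAtMin h
  rw [← numCrossings_add (Nat.zero_le _) (lastMinIdx_le (u := u))]
  have := one_le_numCrossings (u := u) (c := (u 0).1 - 1) (Nat.zero_le (lastMinIdx n u))
    (Or.inr ⟨by omega, by omega⟩)
  have := one_le_numCrossings (u := u) (c := (u 0).1 - 1) (lastMinIdx_le (n := n) (u := u))
    (Or.inl ⟨by omega, by linarith [hmax 0 (Nat.zero_le n)]⟩)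
  omega

-- If the reflected walk still does not start at its minimum, some point reflected to the left of
-- the new start lay to the right of the old start, hence so does the (maximal) endpoint.
theorem fst_zero_lt_fst_end (hmax : EndsAtMax n u) (h : ¬StartsAtMin n u)
    (h' : ¬StartsAtMin n (reflectUpTo (lastMinIdx n u) u)) : (u 0).1 < (u n).1 := by
  simp only [StartsAtMin, not_forall, not_le] at h'
  obtain ⟨i, hi, hlt⟩ := h'
  have hm := fst_lastMinIdx_lt_of_not_startsAtMin h
  rw [reflectUpTo_of_le (Nat.zero_le _)] at hlt
  rcases le_or_gt i (lastMinIdx n u) with his | his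
  · rw [reflectUpTo_of_le his] at hlt
    simp only at hlt
    linarith [hmax i hi]
  · rw [reflectUpTo_of_lt his] at hlt
    simp only at hlt
    linarith [fst_lastMinIdx_le (u := u) hi]

noncomputable def unfoldHead (n : ℕ) : ℕ → (ℕ → ℤ × ℤ) → (ℕ → ℤ × ℤ) × List ℕ :=
  iterateUntil (StartsAtMin n) (lastMinIdx n) reflectUpTo

theorem numCrossings_reflectUpTo_lastMinIdx (hmax : EndsAtMax n u) (h : ¬StartsAtMin n u) :
    numCrossings (reflectUpTo (lastMinIdx n u) u 0).1 0 n (reflectUpTo (lastMinIdx n u) u) + 1 ≤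
        numCrossings ((u 0).1 - 1) 0 n u ∧
      (¬StartsAtMin n (reflectUpTo (lastMinIdx n u) u) →
        numCrossings ((reflectUpTo (lastMinIdx n u) u 0).1 - 1) 0 n (reflectUpTo (lastMinIdx n u) u)
          + 1 ≤ numCrossings (u 0).1 0 n u) := by
  have hm := fst_lastMinIdx_lt_of_not_startsAtMin h
  have hstart : (reflectUpTo (lastMinIdx n u) u 0).1 = 2 * (u (lastMinIdx n u)).1 - (u 0).1 := by
    rw [reflectUpTo_of_le (Nat.zero_le _)]
  refine ⟨numCrossings_reflectUpTo_add_one_le lastMinIdx_le (fun k hk => fst_lastMinIdx_le hk)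
    (by omega) (by linarith [hmax 0 (Nat.zero_le n)]) (by omega), fun h' => ?_⟩
  exact numCrossings_reflectUpTo_add_one_le lastMinIdx_le (fun k hk => fst_lastMinIdx_le hk)
    hm.le (fst_zero_lt_fst_end hmax h h') (by omega)

-- Here the pattern of lower bounds for the two crossing numbers is `(2, 0), (2, 3), (4, 3), …`.
theorem two_mul_add_five_le_numCrossings (hmax : EndsAtMax n u)
    (h : k + 2 ≤ (unfoldHead n fuel u).2.length) :
    2 * k + 5 ≤ numCrossings ((u 0).1 - 1) 0 n u + numCrossings (u 0).1 0 n u := by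
  induction k generalizing fuel u with
  | zero =>
    obtain ⟨hnd, fuel', hlen⟩ := succ_le_length_iterateUntil h
    have hnd' := (succ_le_length_iterateUntil hlen).1
    have := (numCrossings_reflectUpTo_lastMinIdx hmax hnd).2 hnd'
    have := two_le_numCrossings_of_not_startsAtMin hmax hnd
    have := two_le_numCrossings_of_not_startsAtMin hmax.reflectUpTo_lastMinIdx hnd'
    omega
  | succ k ih =>
    obtain ⟨hnd, fuel', hlen⟩ := succ_le_length_iterateUntil h
    have hnd' := (succ_le_length_iterateUntil hlen).1
    obtain ⟨h1, h2⟩ := numCrossings_reflectUpTo_lastMinIdx hmax hnd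
    have := h2 hnd'
    have := ih hmax.reflectUpTo_lastMinIdx hlen
    omega

theorem IsStripWalk.length_unfoldHead_lt (hu : IsStripWalk a b n u) (hmax : EndsAtMax n u) :
    (unfoldHead n fuel u).2.length < (b + 1 - a).toNat := by
  by_contra! h
  have := hu.mem_strip 0 (Nat.zero_le n)
  have := hu.numCrossings_le (c := (u 0).1 - 1) (i := 0) le_rfl
  have := hu.numCrossings_le (c := (u 0).1) (i := 0) le_rfl
  set len := (unfoldHead n fuel u).2.length with hlen
  rcases Nat.lt_or_ge len 2 with hlen2 | hlen2
  · have hnd := (succ_le_length_iterateUntil (k := 0) (by omega : 1 ≤ len)).1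
    have := two_le_numCrossings_of_not_startsAtMin hmax hnd
    omega
  · have := two_mul_add_five_le_numCrossings hmax (fuel := fuel) (k := len - 2) (by omega)
    omega

theorem isStripWalk_unfoldHead (hu : IsStripWalk a b n u) :
    IsStripWalk a b n (unfoldHead n fuel u).1 :=
  iterateUntil_induction _ (fun _ hv _ => hv.reflectUpTo_lastMinIdx) hu

theorem EndsAtMax.unfoldHead (hmax : EndsAtMax n u) : EndsAtMax n (unfoldHead n fuel u).1 :=
  iterateUntil_induction _ (fun _ hv _ => hv.reflectUpTo_lastMinIdx) hmax

theorem snd_unfoldHead_zero : ((unfoldHead n fuel u).1 0).2 = (u 0).2 :=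
  iterateUntil_induction (fun v : ℕ → ℤ × ℤ => (v 0).2 = (u 0).2)
    (fun _ hv _ => snd_reflectOn.trans hv) rfl

theorem foldr_unfoldHead :
    (unfoldHead n fuel u).2.foldr reflectUpTo (unfoldHead n fuel u).1 = u :=
  foldr_iterateUntil fun _ _ => reflectOn_reflectOn le_rfl

theorem mem_Icc_of_mem_unfoldHead : ∀ s ∈ (unfoldHead n fuel u).2, s ∈ Icc 1 n :=
  forall_mem_iterateUntil (fun _ => True) (fun _ _ _ => trivial)
    (fun _ _ h => mem_Icc.mpr ⟨lastMinIdx_pos h, lastMinIdx_le⟩) trivial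

theorem IsStripWalk.startsAtMin_unfoldHead (hu : IsStripWalk a b n u) :
    StartsAtMin n (unfoldHead n (2 * n + 1) u).1 :=
  done_iterateUntil_of_isStripWalk (fun _ hv _ => hv.reflectUpTo_lastMinIdx) (fun v hnd => by
    rw [reflectUpTo_of_ge lastMinIdx_le, reflectUpTo_of_le (Nat.zero_le _)]
    have := fst_lastMinIdx_lt_of_not_startsAtMin hnd
    simp only
    omega) hu

end Unfolding

section Bridges

variable {m : ℕ}

section Folds

variable {op : ℕ → (ℕ → ℤ × ℤ) → ℕ → ℤ × ℤ} {l : List ℕ}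

theorem foldr_add_const {d : ℤ}
    (hop : ∀ p u, op p (fun i => u i + (d, 0)) = fun i => op p u i + (d, 0)) :
    l.foldr op (fun i => u i + (d, 0)) = fun i => l.foldr op u i + (d, 0) := by
  induction l with
  | nil => rfl
  | cons p l ih => rw [List.foldr_cons, ih, hop, List.foldr_cons]

theorem foldr_eqOn
    (hop : ∀ p ≤ n, ∀ u v, Set.EqOn u v (Set.Iic n) → Set.EqOn (op p u) (op p v) (Set.Iic n))
    (hl : ∀ p ∈ l, p ≤ n) (h : Set.EqOn u v (Set.Iic n)) :
    Set.EqOn (l.foldr op u) (l.foldr op v) (Set.Iic n) := by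
  induction l with
  | nil => exact h
  | cons p l ih =>
    rw [List.forall_mem_cons] at hl
    exact hop p hl.1 _ _ (ih hl.2)

end Folds

def toNatWalk (w : Fin (n + 1) → ℤ × ℤ) (i : ℕ) : ℤ × ℤ :=
  w ⟨min i n, by omega⟩

theorem toNatWalk_of_le (w : Fin (n + 1) → ℤ × ℤ) {i : ℕ} (hi : i ≤ n) :
    toNatWalk w i = w ⟨i, by omega⟩ := by
  simp only [toNatWalk, Nat.min_eq_left hi]

theorem toNatWalk_fin (w : Fin (n + 1) → ℤ × ℤ) (i : Fin (n + 1)) : toNatWalk w i = w i :=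
  toNatWalk_of_le w (Nat.lt_succ_iff.mp i.isLt)

theorem toNatWalk_zero {w : Fin (n + 1) → ℤ × ℤ} (hw : IsSAW a b n w) : toNatWalk w 0 = (0, 0) :=
  (toNatWalk_of_le w (Nat.zero_le n)).trans hw.1

theorem isStripWalk_toNatWalk {w : Fin (n + 1) → ℤ × ℤ} (hw : IsSAW a b n w) :
    IsStripWalk a b n (toNatWalk w) where
  injOn i hi j hj h := by
    rw [toNatWalk_of_le w hi, toNatWalk_of_le w hj] at h
    simpa using hw.2.1 h
  mem_strip i _ := hw.2.2.1 _
  step i hi := by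
    rw [toNatWalk_of_le w hi.le, toNatWalk_of_le w hi]
    exact hw.2.2.2 ⟨i, hi⟩

theorem IsStripWalk.isSAW {U : ℕ → ℤ × ℤ} (hU : IsStripWalk a b m U) (h0 : U 0 = (0, 0)) :
    IsSAW a b m fun i => U i := by
  refine ⟨h0, fun i j h => Fin.ext (hU.injOn ?_ ?_ h), fun i => hU.mem_strip i ?_,
    fun i => by simpa using hU.step i i.isLt⟩ <;> simp [Nat.lt_succ_iff.mp (Fin.isLt _)]

def prependOrigin (v : ℕ → ℤ × ℤ) : ℕ → ℤ × ℤ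
  | 0 => (0, 0)
  | j + 1 => ((v j).1 - (v 0).1 + 1, (v j).2)

theorem IsStripWalk.prependOrigin (hv : IsStripWalk a b n v) (hv0 : (v 0).2 = 0)
    (hmin : StartsAtMin n v) : IsStripWalk a b (n + 1) (prependOrigin v) where
  injOn i hi j hj h := by
    simp only [Set.mem_Iic] at hi hj
    match i, j with
    | 0, 0 => rfl
    | 0, j + 1 =>
      have := hmin j (by omega)
      simp only [HammersleyWelsh.prependOrigin, Prod.mk.injEq] at h
      omega
    | i + 1, 0 =>
      have := hmin i (by omega)
      simp only [HammersleyWelsh.prependOrigin, Prod.mk.injEq] at h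
      omega
    | i + 1, j + 1 =>
      simp only [HammersleyWelsh.prependOrigin, Prod.mk.injEq, add_left_inj, sub_left_inj] at h
      rw [hv.injOn (Set.mem_Iic.mpr (by omega)) (Set.mem_Iic.mpr (by omega)) (Prod.ext h.1 h.2)]
  mem_strip i hi := by
    cases i with
    | zero => simpa [HammersleyWelsh.prependOrigin, hv0] using hv.mem_strip 0 (Nat.zero_le n)
    | succ i => exact hv.mem_strip i (by omega)
  step i hi := by
    cases i with
    | zero => simp [HammersleyWelsh.prependOrigin, hv0]
    | succ i =>
      simp only [HammersleyWelsh.prependOrigin]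
      convert hv.step i (by omega) using 3
      ring

theorem toNatWalk_prependOrigin_succ {j : ℕ} (hj : j ≤ n) :
    toNatWalk (fun i : Fin (n + 2) => prependOrigin v i) (j + 1) = v j + (1 - (v 0).1, 0) := by
  rw [toNatWalk_of_le _ (by omega : j + 1 ≤ n + 1)]
  ext
  · simp only [prependOrigin, Prod.fst_add]
    ring
  · simp only [prependOrigin, Prod.snd_add, add_zero]

theorem isBridge_prependOrigin (hv : IsStripWalk a b n v) (hv0 : (v 0).2 = 0)
    (hmin : StartsAtMin n v) (hmax : EndsAtMax n v) :
    IsBridge a b (n + 1) fun i => prependOrigin v i := by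
  refine ⟨(hv.prependOrigin hv0 hmin).isSAW rfl, fun j hj => ?_⟩
  obtain ⟨j, hjn⟩ := j
  cases j with
  | zero => exact absurd rfl hj
  | succ j =>
    have := hmin j (by omega)
    have := hmax j (by omega)
    simp only [Fin.val_zero, Fin.val_last, prependOrigin]
    omega

end Bridges

section ShortLists

variable {α : Type*} (s : Finset α) (k : ℕ)

abbrev ShortLists : Type _ :=
  {l : List α // l.length < k ∧ ∀ x ∈ l, x ∈ s}

def ShortLists.toSigma (l : ShortLists s k) : Σ j : Fin k, Fin j → s :=
  ⟨⟨l.1.length, l.2.1⟩, fun i => ⟨l.1[i], l.2.2 _ (List.getElem_mem _)⟩⟩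

theorem ShortLists.toSigma_injective : Function.Injective (ShortLists.toSigma s k) :=
  fun l l' h => by
    have := congrArg (fun d : Σ j : Fin k, Fin j → s => List.ofFn fun i => (d.2 i : α)) h
    simp only [ShortLists.toSigma] at this
    exact Subtype.ext (by simpa using this)

instance : Finite (ShortLists s k) :=
  Finite.of_injective _ (ShortLists.toSigma_injective s k)

theorem card_shortLists_le : Nat.card (ShortLists s k) ≤ ∑ j ∈ range k, #s ^ j := by
  calc Nat.card (ShortLists s k) ≤ Nat.card (Σ j : Fin k, Fin j → s) :=
        Nat.card_le_card_of_injective _ (ShortLists.toSigma_injective s k)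
    _ = ∑ j ∈ range k, #s ^ j := by
      rw [Nat.card_eq_fintype_card, Fintype.card_sigma]
      simp only [Fintype.card_fun, Fintype.card_fin, Fintype.card_coe]
      exact Fin.sum_univ_eq_sum_range (#s ^ ·) k

end ShortLists

theorem finite_saw (a b : ℤ) (n : ℕ) : Finite {w : Fin (n + 1) → ℤ × ℤ // IsSAW a b n w} := by
  refine Set.Finite.to_subtype <|
    (Set.Finite.pi (t := fun _ => (Icc ((-n : ℤ), a) (n, b) : Set (ℤ × ℤ))) fun _ => finite_toSet _)
      |>.subset fun w (hw : IsSAW a b n w) i _ => ?_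
  have hx := (isStripWalk_toNatWalk hw).abs_fst_sub_fst_zero_le (Nat.lt_succ_iff.mp i.isLt)
  simp only [toNatWalk_fin, toNatWalk_zero hw, sub_zero, abs_le] at hx
  have := hw.2.2.1 i
  simp only [coe_Icc, Set.mem_Icc, Prod.le_def]
  omega

theorem finite_bridge (a b : ℤ) (n : ℕ) : Finite {w : Fin (n + 1) → ℤ × ℤ // IsBridge a b n w} :=
  have := finite_saw a b n
  Finite.of_injective (fun w => (⟨w.1, w.2.1⟩ : {w // IsSAW a b n w}))
    fun _ _ h => Subtype.ext (by simpa using h)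

variable {w : Fin (n + 1) → ℤ × ℤ}

noncomputable def unfoldWalk (w : Fin (n + 1) → ℤ × ℤ) :
    (Fin (n + 2) → ℤ × ℤ) × List ℕ × List ℕ :=
  let r₁ := unfoldTail n (2 * n + 1) (toNatWalk w)
  let r₂ := unfoldHead n (2 * n + 1) r₁.1
  (fun i => prependOrigin r₂.1 i, r₁.2, r₂.2)

def refoldWalk (B : Fin (n + 2) → ℤ × ℤ) (l₁ l₂ : List ℕ) : Fin (n + 1) → ℤ × ℤ :=
  let U := l₁.foldr reflectFrom (l₂.foldr reflectUpTo fun j => toNatWalk B (j + 1))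
  fun i => ((U i).1 - (U 0).1, (U i).2)

theorem isBridge_unfoldWalk (hw : IsSAW a b n w) : IsBridge a b (n + 1) (unfoldWalk w).1 := by
  have hu := isStripWalk_toNatWalk hw
  refine isBridge_prependOrigin (isStripWalk_unfoldHead (isStripWalk_unfoldTail hu)) ?_
    (isStripWalk_unfoldTail hu).startsAtMin_unfoldHead hu.endsAtMax_unfoldTail.unfoldHead
  rw [snd_unfoldHead_zero, unfoldTail_zero, toNatWalk_zero hw]

theorem unfoldWalk_tail_pivots (hw : IsSAW a b n w) :
    (unfoldWalk w).2.1.length < (b + 1 - a).toNat + 1 ∧ ∀ t ∈ (unfoldWalk w).2.1, t ∈ range n :=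
  ⟨Nat.lt_succ_of_le (isStripWalk_toNatWalk hw).length_unfoldTail_le,
    fun t ht => mem_range.mpr (lt_of_mem_unfoldTail t ht)⟩

theorem unfoldWalk_head_pivots (hw : IsSAW a b n w) :
    (unfoldWalk w).2.2.length < (b + 1 - a).toNat ∧ ∀ s ∈ (unfoldWalk w).2.2, s ∈ Icc 1 n :=
  have hu := isStripWalk_toNatWalk hw
  ⟨(isStripWalk_unfoldTail hu).length_unfoldHead_lt hu.endsAtMax_unfoldTail,
    mem_Icc_of_mem_unfoldHead⟩

theorem refoldWalk_unfoldWalk (hw : IsSAW a b n w) :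
    refoldWalk (unfoldWalk w).1 (unfoldWalk w).2.1 (unfoldWalk w).2.2 = w := by
  set r₁ := unfoldTail n (2 * n + 1) (toNatWalk w)
  set r₂ := unfoldHead n (2 * n + 1) r₁.1
  set d := 1 - (r₂.1 0).1
  have hB : Set.EqOn (fun j => toNatWalk (fun i : Fin (n + 2) => prependOrigin r₂.1 i) (j + 1))
      (fun j => r₂.1 j + (d, 0)) (Set.Iic n) := fun j hj => toNatWalk_prependOrigin_succ hj
  have hU := foldr_eqOn (op := reflectFrom) (l := r₁.2)
    (fun p hp _ _ h => reflectOn_eqOn h hp) (fun t ht => (lt_of_mem_unfoldTail t ht).le)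
    (foldr_eqOn (op := reflectUpTo) (l := r₂.2) (fun p hp _ _ h => reflectOn_eqOn h hp)
      (fun s hs => (mem_Icc.mp (mem_Icc_of_mem_unfoldHead s hs)).2) hB)
  rw [foldr_add_const (op := reflectUpTo) fun _ _ => reflectOn_add_const d, foldr_unfoldHead,
    foldr_add_const (op := reflectFrom) fun _ _ => reflectOn_add_const d, foldr_unfoldTail] at hU
  funext i
  have h0 := hU (Set.mem_Iic.mpr (Nat.zero_le n))
  have hi := hU (Set.mem_Iic.mpr (Nat.lt_succ_iff.mp i.isLt))
  simp only [refoldWalk, unfoldWalk]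
  rw [hi, h0]
  dsimp only
  rw [toNatWalk_zero hw, toNatWalk_fin]
  simp

theorem numSAW_le_numBridge_mul (a b : ℤ) (n : ℕ) :
    numSAW a b n ≤ numBridge a b (n + 1) * (∑ j ∈ range ((b + 1 - a).toNat + 1), n ^ j) *
      ∑ j ∈ range (b + 1 - a).toNat, n ^ j := by
  have := finite_bridge a b (n + 1)
  let F : {w // IsSAW a b n w} → {B // IsBridge a b (n + 1) B} ×
      ShortLists (range n) ((b + 1 - a).toNat + 1) × ShortLists (Icc 1 n) (b + 1 - a).toNat :=
    fun w => (⟨_, isBridge_unfoldWalk w.2⟩, ⟨_, unfoldWalk_tail_pivots w.2⟩,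
      ⟨_, unfoldWalk_head_pivots w.2⟩)
  have hF : F.Injective := fun w w' h => by
    simp only [F, Prod.mk.injEq, Subtype.mk.injEq] at h
    rw [Subtype.ext_iff, ← refoldWalk_unfoldWalk w.2, ← refoldWalk_unfoldWalk w'.2, h.1, h.2.1,
      h.2.2]
  calc numSAW a b n ≤ Nat.card ({B // IsBridge a b (n + 1) B} ×
        ShortLists (range n) ((b + 1 - a).toNat + 1) × ShortLists (Icc 1 n) (b + 1 - a).toNat) :=
        Nat.card_le_card_of_injective F hF
    _ ≤ _ := by
      rw [Nat.card_prod, Nat.card_prod, ← mul_assoc]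
      have h1 := card_shortLists_le (range n) ((b + 1 - a).toNat + 1)
      have h2 := card_shortLists_le (Icc 1 n) (b + 1 - a).toNat
      rw [card_range] at h1
      rw [Nat.card_Icc, Nat.add_sub_cancel] at h2
      exact Nat.mul_le_mul (Nat.mul_le_mul_left _ h1) h2

end HammersleyWelsh

theorem stmt_14_general (n : ℕ) :
    numSAW (-1) 2 n ≤ numBridge (-1) 2 (n + 1) *
      ((n + 1) + 2 * (n + 1) ^ 2 + 3 * (n + 1) ^ 3 + 4 * (n + 1) ^ 4 +
        3 * (n + 1) ^ 5 + 2 * (n + 1) ^ 6 + (n + 1) ^ 7) := by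
  have h := HammersleyWelsh.numSAW_le_numBridge_mul (-1) 2 n
  rw [show (2 + 1 - -1 : ℤ).toNat = 4 from rfl] at h
  simp only [sum_range_succ, sum_range_zero, mul_assoc] at h
  -- `k` is the difference of the two polynomials; its coefficients are nonnegative.
  refine h.trans (Nat.mul_le_mul_left _ (Nat.le.intro (k := 15 + 62 * n + 113 * n ^ 2 +
    120 * n ^ 3 + 80 * n ^ 4 + 33 * n ^ 5 + 7 * n ^ 6) ?_))
  ring

/-- For `n ≥ 1`, `c_{[−1,2],n} ≤ b_{[−1,2],n+1} ·
((n+1) + 2(n+1)² + 3(n+1)³ + 4(n+1)⁴ + 3(n+1)⁵ + 2(n+1)⁶ + (n+1)⁷)`. -/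
theorem stmt_14 (n : ℕ) (hn : 1 ≤ n) :
    numSAW (-1) 2 n ≤ numBridge (-1) 2 (n + 1) *
      ((n + 1) + 2 * (n + 1) ^ 2 + 3 * (n + 1) ^ 3 + 4 * (n + 1) ^ 4 +
        3 * (n + 1) ^ 5 + 2 * (n + 1) ^ 6 + (n + 1) ^ 7) :=
  stmt_14_general n
end
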